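/- arXiv:1803.08950 — 7 statements merged into one kernel-verified Lean document; each statement's English description precedes it below -/
import Mathlib

section
/- Let x*_K denote the unique minimizer of the reweighted objective F_K := ∑_{i=1}^n p̄_i f_i. Then ‖x*_K − x*‖² ≤ (1/μ) ∑_{i=1}^n ( f_i(x*_K) − f_i(x*) ) · ( 1/n − p̄_i ). -/
/-!
Both `F / n` and `F_K` are `μ`-strongly convex, and a `μ`-strongly convex function grows at
least like `μ/2 ‖y - x‖²` away from its minimizer `x`. Evaluating the growth of `F / n` at `x*_K`
and that of `F_K` at `x*`, and adding the two inequalities, gives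
`μ ‖x*_K - x*‖² ≤ ∑ᵢ (fᵢ(x*_K) - fᵢ(x*)) (1/n - p̄ᵢ)`.
-/

open Finset

section StrongConvexity

variable {E : Type*} [NormedAddCommGroup E] [NormedSpace ℝ E] {s : Set E} {φ : ℝ → ℝ}

lemma UniformConvexOn.weighted_sum {ι : Type*} (hs : Convex ℝ s) {t : Finset ι} {w : ι → ℝ}
    (hw : ∀ i ∈ t, 0 ≤ w i) {f : ι → E → ℝ} (hf : ∀ i ∈ t, UniformConvexOn s φ (f i)) :
    UniformConvexOn s (fun r ↦ (∑ i ∈ t, w i) * φ r) (fun x ↦ ∑ i ∈ t, w i * f i x) := by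
  refine ⟨hs, fun x hx y hy a b ha hb hab ↦ ?_⟩
  have hterm : ∀ i ∈ t, w i * f i (a • x + b • y) ≤
      w i * (a * f i x + b * f i y - a * b * φ ‖x - y‖) :=
    fun i hi ↦ mul_le_mul_of_nonneg_left ((hf i hi).2 hx hy ha hb hab) (hw i hi)
  calc ∑ i ∈ t, w i * f i (a • x + b • y)
      ≤ ∑ i ∈ t, w i * (a * f i x + b * f i y - a * b * φ ‖x - y‖) := sum_le_sum hterm
    _ = a • ∑ i ∈ t, w i * f i x + b • ∑ i ∈ t, w i * f i y
          - a * b * ((∑ i ∈ t, w i) * φ ‖x - y‖) := by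
      simp only [smul_eq_mul, mul_sum, sum_mul, ← sum_add_distrib, ← sum_sub_distrib]
      exact sum_congr rfl fun i _ ↦ by ring

lemma UniformConvexOn.le_sub_of_isMinOn {f : E → ℝ} (hf : UniformConvexOn s φ f) {x y : E}
    (hx : x ∈ s) (hy : y ∈ s) (hmin : IsMinOn f s x) :
    φ ‖y - x‖ ≤ f y - f x := by
  have hshrink : ∀ b ∈ Set.Ioo (0 : ℝ) 1, (1 - b) * φ ‖y - x‖ ≤ f y - f x := by
    rintro b ⟨hb0, hb1⟩
    have hconv := hf.2 hx hy (sub_nonneg.2 hb1.le) hb0.le (sub_add_cancel 1 b)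
    have hle : f x ≤ f ((1 - b) • x + b • y) :=
      hmin (hf.1 hx hy (sub_nonneg.2 hb1.le) hb0.le (sub_add_cancel 1 b))
    rw [norm_sub_rev, smul_eq_mul, smul_eq_mul] at hconv
    have : b * ((1 - b) * φ ‖y - x‖) ≤ b * (f y - f x) := by linarith
    exact le_of_mul_le_mul_left this hb0
  have hlim : Filter.Tendsto (fun b : ℝ ↦ (1 - b) * φ ‖y - x‖) (nhdsWithin 0 (Set.Ioi 0))
      (nhds (φ ‖y - x‖)) := by
    have hcont : Continuous (fun b : ℝ ↦ (1 - b) * φ ‖y - x‖) := by fun_prop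
    simpa using (hcont.tendsto 0).mono_left nhdsWithin_le_nhds
  exact le_of_tendsto hlim (Filter.mem_of_superset (Ioo_mem_nhdsGT one_pos) hshrink)

lemma StrongConvexOn.half_mul_sq_norm_sub_le_of_isMinOn {m : ℝ} {f : E → ℝ}
    (hf : StrongConvexOn s m f) {x y : E} (hx : x ∈ s) (hy : y ∈ s) (hmin : IsMinOn f s x) :
    m / 2 * ‖y - x‖ ^ 2 ≤ f y - f x :=
  UniformConvexOn.le_sub_of_isMinOn hf hx hy hmin

lemma StrongConvexOn.weighted_sum_of_sum_eq_one {ι : Type*} {m : ℝ} (hs : Convex ℝ s)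
    {t : Finset ι} {w : ι → ℝ} (hw : ∀ i ∈ t, 0 ≤ w i) (hw₁ : ∑ i ∈ t, w i = 1) {f : ι → E → ℝ}
    (hf : ∀ i ∈ t, StrongConvexOn s m (f i)) :
    StrongConvexOn s m (fun x ↦ ∑ i ∈ t, w i * f i x) := by
  have h := UniformConvexOn.weighted_sum hs hw hf
  simp only [hw₁, one_mul] at h
  exact h

end StrongConvexity

theorem stmt_1_general
    {n d : ℕ} (hn : 1 ≤ n)
    {μ : ℝ} (hμ : 0 < μ)
    (f : Fin n → EuclideanSpace ℝ (Fin d) → ℝ)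
    (hsc : ∀ i, ConvexOn ℝ Set.univ (fun x => f i x - μ / 2 * ‖x‖ ^ 2))
    (xstar : EuclideanSpace ℝ (Fin d))
    (hxstar : ∀ y, ∑ i, f i xstar ≤ ∑ i, f i y)
    (p : Fin n → ℝ) (hp : ∀ i, p i ∈ Set.Ioo (0:ℝ) 1) (hpsum : ∑ i, p i = 1)
    (xK : EuclideanSpace ℝ (Fin d))
    (hxK : ∀ y, ∑ i, p i * f i xK ≤ ∑ i, p i * f i y) :
    ‖xK - xstar‖ ^ 2 ≤
      (1 / μ) * ∑ i, (f i xK - f i xstar) * (1 / (n : ℝ) - p i) := by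
  have hn₀ : (n : ℝ) ≠ 0 := by positivity
  have hsc' : ∀ i ∈ univ, StrongConvexOn Set.univ μ (f i) :=
    fun i _ ↦ strongConvexOn_iff_convex.2 (hsc i)
  have hmean := StrongConvexOn.weighted_sum_of_sum_eq_one convex_univ
    (fun _ _ ↦ by positivity) (by simp [hn₀]) hsc' (w := fun _ ↦ 1 / (n : ℝ))
  have hweighted := StrongConvexOn.weighted_sum_of_sum_eq_one convex_univ
    (fun i _ ↦ (hp i).1.le) hpsum hsc'
  have hgrowth_mean := hmean.half_mul_sq_norm_sub_le_of_isMinOn (Set.mem_univ xstar)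
    (Set.mem_univ xK) fun y _ ↦ by
      simp only [← mul_sum]
      exact mul_le_mul_of_nonneg_left (hxstar y) (by positivity)
  have hgrowth_weighted := hweighted.half_mul_sq_norm_sub_le_of_isMinOn (Set.mem_univ xK)
    (Set.mem_univ xstar) fun y _ ↦ hxK y
  rw [norm_sub_rev] at hgrowth_weighted
  have hsplit : ∑ i, (f i xK - f i xstar) * (1 / (n : ℝ) - p i) =
      (∑ i, 1 / (n : ℝ) * f i xK - ∑ i, 1 / (n : ℝ) * f i xstar) +
        (∑ i, p i * f i xstar - ∑ i, p i * f i xK) := by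
    simp only [← sum_sub_distrib, ← sum_add_distrib]
    exact sum_congr rfl fun i _ ↦ by ring
  rw [hsplit, one_div_mul_eq_div, le_div_iff₀ hμ]
  linarith

/-- Key inequality in the proof of Theorem 3:
`‖xK − xstar‖² ≤ (1/μ) ∑ i (f i xK − f i xstar)(1/n − p i)`. -/
theorem stmt_1
    {n d : ℕ} (hn : 1 ≤ n) (hd : 1 ≤ d)
    {μ M : ℝ} (hμ : 0 < μ) (hμM : μ ≤ M)
    (f : Fin n → EuclideanSpace ℝ (Fin d) → ℝ)
    (hdiff : ∀ i, Differentiable ℝ (f i))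
    (hsc : ∀ i, ConvexOn ℝ Set.univ (fun x => f i x - μ / 2 * ‖x‖ ^ 2))
    (hlip : ∀ i x y, ‖gradient (f i) x - gradient (f i) y‖ ≤ M * ‖x - y‖)
    (xi : Fin n → EuclideanSpace ℝ (Fin d))
    (hxi : ∀ i y, f i (xi i) ≤ f i y)
    (xstar : EuclideanSpace ℝ (Fin d))
    (hxstar : ∀ y, ∑ i, f i xstar ≤ ∑ i, f i y)
    (p : Fin n → ℝ) (hp : ∀ i, p i ∈ Set.Ioo (0:ℝ) 1) (hpsum : ∑ i, p i = 1)
    (xK : EuclideanSpace ℝ (Fin d))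
    (hxK : ∀ y, ∑ i, p i * f i xK ≤ ∑ i, p i * f i y) :
    ‖xK - xstar‖ ^ 2 ≤
      (1 / μ) * ∑ i, (f i xK - f i xstar) * (1 / (n : ℝ) - p i) :=
  stmt_1_general hn hμ f hsc xstar hxstar p hp hpsum xK hxK
end

section
/- Suppose the gradient bound and the consensus bound hold. Then for all i ∈ {1,…,n} and all k ≥ 0 with k ≤ K−1, ⟨∇f_i(z_i[k]), x̄[k] − x*_K⟩ ≥ μ‖x̄[k] − x*_K‖² − γ_i[k] − χ_i[k] + ⟨∇f_i(x*_K), x̄[k] − x*_K⟩. -/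
open Finset
open scoped RealInnerProductSpace

/-!
The gradient of a `μ`-strongly convex function is `μ`-strongly monotone, and so is the
weighted gradient `G = ∑ⱼ p̄ⱼ ∇fⱼ` of the reweighted objective, which vanishes at its minimizer
`x*_K`. Hence `μ ‖x̄[k] - x*_K‖ ≤ ‖G (x̄[k])‖ ≤ L`. Strong monotonicity of `∇fᵢ` between `x̄[k]`
and `x*_K` gives the main term; replacing `x̄[k]` by `zᵢ[k]` in the gradient costs at most
`M ‖zᵢ[k] - x̄[k]‖ · L / μ`, which the consensus bound turns into `γᵢ[k] + χᵢ[k]`.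
-/

open scoped Gradient

variable {E : Type*}

section NormedSpace

variable [NormedAddCommGroup E] [NormedSpace ℝ E]

lemma ConvexOn.apply_add_le_of_hasFDerivAt {f : E → ℝ} {f' : E →L[ℝ] ℝ} {x : E}
    (hf : ConvexOn ℝ Set.univ f) (hf' : HasFDerivAt f f' x) (y : E) :
    f x + f' (y - x) ≤ f y := by
  have hline : ConvexOn ℝ Set.univ (f ∘ AffineMap.lineMap (k := ℝ) x y) := by
    simpa using hf.comp_affineMap (AffineMap.lineMap (k := ℝ) x y)
  have hderiv : HasDerivAt (f ∘ AffineMap.lineMap (k := ℝ) x y) (f' (y - x)) 0 := by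
    have hx : AffineMap.lineMap (k := ℝ) x y (0 : ℝ) = x := AffineMap.lineMap_apply_zero x y
    exact (hx ▸ hf').comp_hasDerivAt (0 : ℝ) AffineMap.hasDerivAt_lineMap
  have hslope := hline.le_slope_of_hasDerivAt (Set.mem_univ 0) (Set.mem_univ 1) one_pos hderiv
  simp only [slope_def_field, Function.comp_apply, AffineMap.lineMap_apply_one,
    AffineMap.lineMap_apply_zero, sub_zero, div_one] at hslope
  exact le_sub_iff_add_le'.1 hslope

end NormedSpace

section InnerProductSpace

variable [NormedAddCommGroup E] [InnerProductSpace ℝ E]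

lemma mul_norm_sub_sq_le_inner_sum_smul_sub {ι : Type*} {s : Finset ι} {w : ι → ℝ}
    {g : ι → E → E} {m : ℝ} {x y : E} (hw0 : ∀ j ∈ s, 0 ≤ w j) (hw1 : ∑ j ∈ s, w j = 1)
    (hg : ∀ j ∈ s, m * ‖x - y‖ ^ 2 ≤ ⟪g j x - g j y, x - y⟫) :
    m * ‖x - y‖ ^ 2 ≤ ⟪∑ j ∈ s, w j • g j x - ∑ j ∈ s, w j • g j y, x - y⟫ := by
  rw [← sum_sub_distrib, sum_inner]
  calc m * ‖x - y‖ ^ 2 = ∑ j ∈ s, w j * (m * ‖x - y‖ ^ 2) := by rw [← sum_mul, hw1, one_mul]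
    _ ≤ ∑ j ∈ s, ⟪w j • g j x - w j • g j y, x - y⟫ := sum_le_sum fun j hj ↦ by
      rw [← smul_sub, real_inner_smul_left]
      exact mul_le_mul_of_nonneg_left (hg j hj) (hw0 j hj)

lemma mul_norm_sub_le_norm_of_mul_norm_sub_sq_le_inner {G : E → E} {m : ℝ} {x y : E}
    (hG : m * ‖y - x‖ ^ 2 ≤ ⟪G y - G x, y - x⟫) (hx : G x = 0) :
    m * ‖y - x‖ ≤ ‖G y‖ := by
  rw [hx, sub_zero] at hG
  have hmul : m * ‖y - x‖ * ‖y - x‖ ≤ ‖G y‖ * ‖y - x‖ := by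
    linarith [real_inner_le_norm (G y) (y - x)]
  rcases (norm_nonneg (y - x)).eq_or_lt with h | h
  · rw [← h, mul_zero]
    exact norm_nonneg _
  · exact le_of_mul_le_mul_right hmul h

variable [CompleteSpace E]

lemma StrongConvexOn.apply_add_inner_gradient_add_le {f : E → ℝ} {m : ℝ} {x : E}
    (hf : StrongConvexOn Set.univ m f) (hx : DifferentiableAt ℝ f x) (y : E) :
    f x + ⟪∇ f x, y - x⟫ + m / 2 * ‖y - x‖ ^ 2 ≤ f y := by
  have hderiv : HasFDerivAt (fun x ↦ f x - m / 2 * ‖x‖ ^ 2)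
      (fderiv ℝ f x - (m / 2) • 2 • innerSL ℝ x) x :=
    hx.hasFDerivAt.sub ((hasStrictFDerivAt_norm_sq x).hasFDerivAt.const_mul _)
  have hconv := (strongConvexOn_iff_convex.1 hf).apply_add_le_of_hasFDerivAt hderiv y
  have hnorm : ‖y‖ ^ 2 = ‖x‖ ^ 2 + 2 * ⟪x, y - x⟫ + ‖y - x‖ ^ 2 := by
    rw [← norm_add_sq_real, add_sub_cancel]
  simp only [sub_apply, smul_apply, innerSL_apply_apply, ← inner_gradient_left,
    smul_eq_mul, nsmul_eq_mul, hnorm] at hconv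
  linear_combination hconv

lemma StrongConvexOn.mul_norm_sub_sq_le_inner_gradient_sub {f : E → ℝ} {m : ℝ} {x y : E}
    (hf : StrongConvexOn Set.univ m f) (hx : DifferentiableAt ℝ f x) (hy : DifferentiableAt ℝ f y) :
    m * ‖x - y‖ ^ 2 ≤ ⟪∇ f x - ∇ f y, x - y⟫ := by
  have hxy := hf.apply_add_inner_gradient_add_le hx y
  have hyx := hf.apply_add_inner_gradient_add_le hy x
  rw [← neg_sub x y, inner_neg_right, norm_neg] at hxy
  rw [inner_sub_left]
  linarith

lemma sum_smul_gradient_eq_zero_of_isMinOn {ι : Type*} {s : Finset ι} {w : ι → ℝ}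
    {f : ι → E → ℝ} {x : E} (hf : ∀ j ∈ s, DifferentiableAt ℝ (f j) x)
    (hx : IsMinOn (fun y ↦ ∑ j ∈ s, w j * f j y) Set.univ x) :
    ∑ j ∈ s, w j • ∇ (f j) x = 0 := by
  have hderiv : HasFDerivAt (fun y ↦ ∑ j ∈ s, w j * f j y)
      (∑ j ∈ s, w j • fderiv ℝ (f j) x) x :=
    HasFDerivAt.fun_sum fun j hj ↦ (hf j hj).hasFDerivAt.const_mul (w j)
  have hzero := (hx.isLocalMin Filter.univ_mem).hasFDerivAt_eq_zero hderiv
  simpa [gradient, map_sum, map_smul] using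
    congrArg (InnerProductSpace.toDual ℝ E).symm hzero

lemma mul_norm_sub_le_of_sum_smul_gradient_eq_zero {ι : Type*} {s : Finset ι} {w : ι → ℝ}
    {f : ι → E → ℝ} {m L : ℝ} {x y : E} (hw0 : ∀ j ∈ s, 0 ≤ w j) (hw1 : ∑ j ∈ s, w j = 1)
    (hf : ∀ j ∈ s, StrongConvexOn Set.univ m (f j)) (hdiff : ∀ j ∈ s, Differentiable ℝ (f j))
    (hx : ∑ j ∈ s, w j • ∇ (f j) x = 0) (hy : ∀ j ∈ s, ‖∇ (f j) y‖ ≤ L) :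
    m * ‖y - x‖ ≤ L := by
  have hmono := mul_norm_sub_sq_le_inner_sum_smul_sub (g := fun j ↦ ∇ (f j)) hw0 hw1
    fun j hj ↦ (hf j hj).mul_norm_sub_sq_le_inner_gradient_sub (hdiff j hj y) (hdiff j hj x)
  refine (mul_norm_sub_le_norm_of_mul_norm_sub_sq_le_inner
    (G := fun z ↦ ∑ j ∈ s, w j • ∇ (f j) z) hmono hx).trans ?_
  exact mem_closedBall_zero_iff.1 <| (convex_closedBall 0 L).sum_mem hw0 hw1
    fun j hj ↦ mem_closedBall_zero_iff.2 (hy j hj)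

end InnerProductSpace

theorem stmt_4_general
    {n d : ℕ}
    {μ M : ℝ} (hμ : 0 < μ) (hμM : μ ≤ M)
    (f : Fin n → EuclideanSpace ℝ (Fin d) → ℝ)
    (hdiff : ∀ i, Differentiable ℝ (f i))
    (hsc : ∀ i, ConvexOn ℝ Set.univ (fun x => f i x - μ / 2 * ‖x‖ ^ 2))
    (hlip : ∀ i x y, ‖gradient (f i) x - gradient (f i) y‖ ≤ M * ‖x - y‖)
    (δ : Fin n → ℕ → ℕ)
    (α : Fin n → ℕ → ℝ)
    (z : Fin n → ℕ → EuclideanSpace ℝ (Fin d))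
    (xbar : ℕ → EuclideanSpace ℝ (Fin d))
    (K : ℕ)
    (hppos : ∀ i, 0 < ∑ k ∈ Finset.range K, α i k * (δ i k : ℝ))
    (xK : EuclideanSpace ℝ (Fin d))
    (hxK : ∀ y,
      ∑ i, ((∑ k ∈ Finset.range K, α i k * (δ i k : ℝ)) /
          (∑ j, ∑ k ∈ Finset.range K, α j k * (δ j k : ℝ))) * f i xK ≤
      ∑ i, ((∑ k ∈ Finset.range K, α i k * (δ i k : ℝ)) /
          (∑ j, ∑ k ∈ Finset.range K, α j k * (δ j k : ℝ))) * f i y)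
    (L : ℝ)
    (hgradx : ∀ i k, ‖gradient (f i) (xbar k)‖ ≤ L)
    (C q : ℝ)
    (a : Fin n → ℝ)
    (hcons : ∀ i k, ‖z i k - xbar k‖ ≤
      C * q ^ k * a i + C * L * ∑ s ∈ Finset.range (k + 1), q ^ (k - s) * (α i s * (δ i s : ℝ)))
    (i : Fin n) (k : ℕ) :
    ⟪gradient (f i) (z i k), xbar k - xK⟫ ≥
      μ * ‖xbar k - xK‖ ^ 2
        - (M / μ) * L * C * a i * q ^ k
        - (M / μ) * L ^ 2 * C *
            ∑ s ∈ Finset.range (k + 1), q ^ (k - s) * (α i s * (δ i s : ℝ))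
        + ⟪gradient (f i) xK, xbar k - xK⟫ := by
  set P : Fin n → ℝ := fun j ↦ ∑ k ∈ Finset.range K, α j k * (δ j k : ℝ)
  have hPsum : 0 < ∑ j, P j := sum_pos (fun j _ ↦ hppos j) ⟨i, mem_univ i⟩
  have hw0 : ∀ j ∈ univ, 0 ≤ P j / ∑ j, P j := fun j _ ↦ div_nonneg (hppos j).le hPsum.le
  have hw1 : ∑ j, P j / ∑ j, P j = 1 := by rw [← sum_div, div_self hPsum.ne']
  have hstrong : ∀ j ∈ univ, StrongConvexOn Set.univ μ (f j) :=
    fun j _ ↦ strongConvexOn_iff_convex.2 (hsc j)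
  have hstat : ∑ j, (P j / ∑ j, P j) • ∇ (f j) xK = 0 :=
    sum_smul_gradient_eq_zero_of_isMinOn (fun j _ ↦ hdiff j xK) fun y _ ↦ hxK y
  have hdist : ‖xbar k - xK‖ ≤ L / μ := by
    rw [le_div_iff₀' hμ]
    exact mul_norm_sub_le_of_sum_smul_gradient_eq_zero hw0 hw1 hstrong (fun j _ ↦ hdiff j) hstat
      fun j _ ↦ hgradx j k
  set B := C * q ^ k * a i +
    C * L * ∑ s ∈ Finset.range (k + 1), q ^ (k - s) * (α i s * (δ i s : ℝ)) with hB
  have hgap : ‖∇ (f i) (z i k) - ∇ (f i) (xbar k)‖ ≤ M * B :=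
    (hlip i _ _).trans (mul_le_mul_of_nonneg_left (hcons i k) (hμ.le.trans hμM))
  have hperturb : -(M * B * (L / μ)) ≤ ⟪∇ (f i) (z i k) - ∇ (f i) (xbar k), xbar k - xK⟫ :=
    neg_le_of_abs_le <| (abs_real_inner_le_norm _ _).trans <|
      mul_le_mul hgap hdist (norm_nonneg _) ((norm_nonneg _).trans hgap)
  have hcost : M * B * (L / μ) = (M / μ) * L * C * a i * q ^ k +
      (M / μ) * L ^ 2 * C * ∑ s ∈ Finset.range (k + 1), q ^ (k - s) * (α i s * (δ i s : ℝ)) := by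
    rw [hB]
    field_simp
  have hmain := (hstrong i (mem_univ i)).mul_norm_sub_sq_le_inner_gradient_sub
    (hdiff i (xbar k)) (hdiff i xK)
  rw [inner_sub_left] at hmain hperturb
  linarith

/-- Lemma 2: under the gradient bound and the consensus bound, for all `i` and `k ≤ K − 1`,
`⟨∇f_i(z_i[k]), x̄[k] − x*_K⟩ ≥ μ‖x̄[k] − x*_K‖² − γ_i[k] − χ_i[k] + ⟨∇f_i(x*_K), x̄[k] − x*_K⟩`,
where `γ_i[k] = κ L C a_i q^k` and `χ_i[k] = κ L² C ∑_{s=0}^k q^{k−s} α_i[s] δ_i[s]`, `κ = M/μ`. -/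
theorem stmt_4
    {n d : ℕ} (hn : 1 ≤ n) (hd : 1 ≤ d)
    {μ M : ℝ} (hμ : 0 < μ) (hμM : μ ≤ M)
    (f : Fin n → EuclideanSpace ℝ (Fin d) → ℝ)
    (hdiff : ∀ i, Differentiable ℝ (f i))
    (hsc : ∀ i, ConvexOn ℝ Set.univ (fun x => f i x - μ / 2 * ‖x‖ ^ 2))
    (hlip : ∀ i x y, ‖gradient (f i) x - gradient (f i) y‖ ≤ M * ‖x - y‖)
    (δ : Fin n → ℕ → ℕ) (hδ : ∀ i k, δ i k = 0 ∨ δ i k = 1) (hδ0 : ∀ i, δ i 0 = 1)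
    (α : Fin n → ℕ → ℝ) (hα : ∀ i k, 0 ≤ α i k)
    (z : Fin n → ℕ → EuclideanSpace ℝ (Fin d))
    (xbar : ℕ → EuclideanSpace ℝ (Fin d))
    (hrec : ∀ k, xbar (k + 1) =
      xbar k - ((n : ℝ))⁻¹ • ∑ i, (α i k * (δ i k : ℝ)) • gradient (f i) (z i k))
    (K : ℕ) (hK : 1 ≤ K)
    (hppos : ∀ i, 0 < ∑ k ∈ Finset.range K, α i k * (δ i k : ℝ))
    (xK : EuclideanSpace ℝ (Fin d))
    (hxK : ∀ y,
      ∑ i, ((∑ k ∈ Finset.range K, α i k * (δ i k : ℝ)) /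
          (∑ j, ∑ k ∈ Finset.range K, α j k * (δ j k : ℝ))) * f i xK ≤
      ∑ i, ((∑ k ∈ Finset.range K, α i k * (δ i k : ℝ)) /
          (∑ j, ∑ k ∈ Finset.range K, α j k * (δ j k : ℝ))) * f i y)
    (L : ℝ) (hL : 0 < L)
    (hgradz : ∀ i k, ‖gradient (f i) (z i k)‖ ≤ L)
    (hgradx : ∀ i k, ‖gradient (f i) (xbar k)‖ ≤ L)
    (C q : ℝ) (hC : 0 < C) (hq : q ∈ Set.Ioo (0:ℝ) 1)
    (a : Fin n → ℝ) (ha : ∀ i, 0 ≤ a i)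
    (hcons : ∀ i k, ‖z i k - xbar k‖ ≤
      C * q ^ k * a i + C * L * ∑ s ∈ Finset.range (k + 1), q ^ (k - s) * (α i s * (δ i s : ℝ)))
    (i : Fin n) (k : ℕ) (hk : k ≤ K - 1) :
    ⟪gradient (f i) (z i k), xbar k - xK⟫ ≥
      μ * ‖xbar k - xK‖ ^ 2
        - (M / μ) * L * C * a i * q ^ k
        - (M / μ) * L ^ 2 * C *
            ∑ s ∈ Finset.range (k + 1), q ^ (k - s) * (α i s * (δ i s : ℝ))
        + ⟪gradient (f i) xK, xbar k - xK⟫ :=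
  stmt_4_general hμ hμM f hdiff hsc hlip δ α z xbar K hppos xK hxK L hgradx C q a hcons i k
end

section
/- Let θ ∈ (0,1), B > 0 and w_1,…,w_n ≥ 1. There exist constants A_1, A_2, A_3 > 0, depending only on n, κ, L, C, q, B, θ, w_1,…,w_n and a_1,…,a_n, such that for every integer K ≥ 1 and every choice of activation indicators δ_i : ℕ → {0,1}, if the step-sizes are constant, α_i[k] = w_i B / K^θ for all k, then b_1[K] ≤ A_1 / K^{2θ−1}, b_2[K] ≤ A_2 / K^θ, and b_3[K] ≤ A_3 / K^{2θ−1}. -/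
/-!
Every active step `α_i[k] δ_i[k]` lies in `[0, w_i β]` with `β = B / K^θ`, and the discounted
sum inside `χ_i[k]` is at most `w_i β / (1 - q)`. So each of the `K` summands of `b₁` and `b₃`
is `O(β²)`, giving `O(K β²) = O(K^{1-2θ})`, while the summands of `b₂` are `O(β q^k)`, whose
sum is `O(β)` by the geometric series.
-/

open Finset

section

variable {ι : Type*} [Fintype ι] {c : ι → ℕ → ℝ} {w : ι → ℝ} {β p q : ℝ}

lemma geom_sum_range_le_of_lt_one (hq0 : 0 ≤ q) (hq1 : q < 1) (n : ℕ) :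
    ∑ j ∈ range n, q ^ j ≤ 1 / (1 - q) := by
  have h := geom_sum_Ico_le_of_lt_one (m := 0) (n := n) hq0 hq1
  rwa [pow_zero, ← range_eq_Ico] at h

lemma sum_range_succ_pow_sub_mul_le (hq0 : 0 ≤ q) (hq1 : q < 1) {x : ℕ → ℝ} {m : ℝ}
    (hm : 0 ≤ m) (hx : ∀ s, x s ≤ m) (k : ℕ) :
    ∑ s ∈ range (k + 1), q ^ (k - s) * x s ≤ m / (1 - q) :=
  calc ∑ s ∈ range (k + 1), q ^ (k - s) * x s
      ≤ ∑ s ∈ range (k + 1), q ^ (k - s) * m := by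
        gcongr with s; exact hx s
    _ = m * ∑ j ∈ range (k + 1), q ^ j := by
        rw [← sum_range_reflect, mul_sum]
        refine sum_congr rfl fun j hj => ?_
        rw [mul_comm, Nat.add_sub_cancel, Nat.sub_sub_self (by simpa [Nat.lt_succ_iff] using hj)]
    _ ≤ m * (1 / (1 - q)) := by gcongr; exact geom_sum_range_le_of_lt_one hq0 hq1 _
    _ = m / (1 - q) := mul_one_div m _

lemma sum_sq_weighted_sum_le (hp : 0 ≤ p) (hc0 : ∀ i k, 0 ≤ c i k)
    (hc : ∀ i k, c i k ≤ w i * β) (K : ℕ) :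
    ∑ k ∈ range K, (p * ∑ i, c i k) ^ 2 ≤ K * β ^ 2 * (p * ∑ i, w i) ^ 2 := by
  have hterm : ∀ k ∈ range K, (p * ∑ i, c i k) ^ 2 ≤ (β * (p * ∑ i, w i)) ^ 2 := by
    intro k _
    have hsum : ∑ i, c i k ≤ (∑ i, w i) * β := by
      rw [sum_mul]; exact sum_le_sum fun i _ => hc i k
    have hsum0 : 0 ≤ ∑ i, c i k := sum_nonneg fun i _ => hc0 i k
    exact pow_le_pow_left₀ (by positivity) (by nlinarith) 2
  calc _ ≤ (range K).card • (β * (p * ∑ i, w i)) ^ 2 := sum_le_card_nsmul _ _ _ hterm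
    _ = K * β ^ 2 * (p * ∑ i, w i) ^ 2 := by rw [card_range, nsmul_eq_mul]; ring

lemma sum_weighted_sum_mul_geometric_le (hp : 0 ≤ p) (hq0 : 0 ≤ q) (hq1 : q < 1) {g : ι → ℝ}
    (hg : ∀ i, 0 ≤ g i) (hc0 : ∀ i k, 0 ≤ c i k) (hc : ∀ i k, c i k ≤ w i * β) (K : ℕ) :
    ∑ k ∈ range K, p * ∑ i, c i k * (g i * q ^ k) ≤ β * (p * ∑ i, w i * g i) / (1 - q) := by
  set X := β * (p * ∑ i, w i * g i)
  have hwβ : ∀ i, 0 ≤ w i * β := fun i => (hc0 i 0).trans (hc i 0)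
  have hX : X = p * ∑ i, w i * β * g i := by
    simp only [X, mul_sum]; exact sum_congr rfl fun i _ => by ring
  have hX0 : 0 ≤ X := hX ▸ mul_nonneg hp (sum_nonneg fun i _ => mul_nonneg (hwβ i) (hg i))
  have hterm : ∀ k, p * ∑ i, c i k * (g i * q ^ k) ≤ X * q ^ k := fun k =>
    calc p * ∑ i, c i k * (g i * q ^ k) ≤ p * ∑ i, w i * β * (g i * q ^ k) := by
          gcongr with i
          · exact mul_nonneg (hg i) (pow_nonneg hq0 k)
          · exact hc i k
      _ = X * q ^ k := by rw [hX, mul_assoc, sum_mul]; simp only [mul_assoc]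
  calc _ ≤ ∑ k ∈ range K, X * q ^ k := sum_le_sum fun k _ => hterm k
    _ = X * ∑ k ∈ range K, q ^ k := (mul_sum _ _ _).symm
    _ ≤ X * (1 / (1 - q)) := by gcongr; exact geom_sum_range_le_of_lt_one hq0 hq1 K
    _ = X / (1 - q) := mul_one_div X _

lemma sum_weighted_sum_mul_discounted_le (hp : 0 ≤ p) {r : ℝ} (hr : 0 ≤ r) (hq0 : 0 ≤ q)
    (hq1 : q < 1) (hc0 : ∀ i k, 0 ≤ c i k) (hc : ∀ i k, c i k ≤ w i * β) (K : ℕ) :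
    ∑ k ∈ range K, p * ∑ i, c i k * (r * ∑ s ∈ range (k + 1), q ^ (k - s) * c i s)
      ≤ K * β ^ 2 * (p * r * ∑ i, w i ^ 2) / (1 - q) := by
  have hwβ : ∀ i, 0 ≤ w i * β := fun i => (hc0 i 0).trans (hc i 0)
  have hterm : ∀ k ∈ range K,
      p * ∑ i, c i k * (r * ∑ s ∈ range (k + 1), q ^ (k - s) * c i s)
        ≤ β ^ 2 * (p * r * ∑ i, w i ^ 2) / (1 - q) := by
    intro k _
    calc p * ∑ i, c i k * (r * ∑ s ∈ range (k + 1), q ^ (k - s) * c i s)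
        ≤ p * ∑ i, w i * β * (r * (w i * β / (1 - q))) := by
          refine mul_le_mul_of_nonneg_left (sum_le_sum fun i _ => ?_) hp
          refine mul_le_mul (hc i k) (mul_le_mul_of_nonneg_left ?_ hr) ?_ (hwβ i)
          · exact sum_range_succ_pow_sub_mul_le hq0 hq1 (hwβ i) (hc i) k
          · exact mul_nonneg hr (sum_nonneg fun s _ => mul_nonneg (pow_nonneg hq0 _) (hc0 i s))
      _ = β ^ 2 * (p * r * ∑ i, w i ^ 2) / (1 - q) := by
          simp only [mul_sum, sum_div]; exact sum_congr rfl fun i _ => by ring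
  calc _ ≤ (range K).card • (β ^ 2 * (p * r * ∑ i, w i ^ 2) / (1 - q)) :=
        sum_le_card_nsmul _ _ _ hterm
    _ = K * β ^ 2 * (p * r * ∑ i, w i ^ 2) / (1 - q) := by
        rw [card_range, nsmul_eq_mul]; ring

end

lemma mul_div_rpow_sq {x : ℝ} (hx : 0 < x) (B θ : ℝ) :
    x * (B / x ^ θ) ^ 2 = B ^ 2 / x ^ (2 * θ - 1) := by
  rw [div_pow, ← Real.rpow_natCast (x ^ θ), ← Real.rpow_mul hx.le, Real.rpow_sub hx,
    Real.rpow_one]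
  push_cast
  field_simp

theorem stmt_6_general
    {n : ℕ}
    {κ L C q : ℝ} (hκ : 0 < κ) (hL : 0 < L) (hC : 0 < C) (hq : q ∈ Set.Ioo (0:ℝ) 1)
    (a : Fin n → ℝ) (ha : ∀ i, 0 ≤ a i)
    {θ B : ℝ} (hB : 0 < B)
    (w : Fin n → ℝ) (hw : ∀ i, 1 ≤ w i) :
    ∃ A₁ A₂ A₃ : ℝ, 0 < A₁ ∧ 0 < A₂ ∧ 0 < A₃ ∧
      ∀ K : ℕ, 1 ≤ K →
      ∀ δ : Fin n → ℕ → ℕ, (∀ i k, δ i k = 0 ∨ δ i k = 1) →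
      ∀ α : Fin n → ℕ → ℝ, (∀ i k, α i k = w i * B / (K : ℝ) ^ θ) →
        (L * ∑ k ∈ Finset.range K,
            ((1 / (n : ℝ)) * ∑ i, α i k * (δ i k : ℝ)) ^ 2
          ≤ A₁ / (K : ℝ) ^ (2 * θ - 1)) ∧
        (2 * L * ∑ k ∈ Finset.range K,
            (1 / (n : ℝ)) * ∑ i, α i k * (δ i k : ℝ) * (κ * L * C * a i * q ^ k)
          ≤ A₂ / (K : ℝ) ^ θ) ∧
        (2 * L * ∑ k ∈ Finset.range K,
            (1 / (n : ℝ)) * ∑ i, α i k * (δ i k : ℝ) *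
              (κ * L ^ 2 * C *
                ∑ s ∈ Finset.range (k + 1), q ^ (k - s) * (α i s * (δ i s : ℝ)))
          ≤ A₃ / (K : ℝ) ^ (2 * θ - 1)) := by
  obtain ⟨hq0, hq1⟩ := hq
  have hp : (0 : ℝ) ≤ 1 / n := by positivity
  have hg : ∀ i, 0 ≤ κ * L * C * a i := fun i => by have := ha i; positivity
  -- `max _ 1`: the natural constants may vanish, e.g. the one for `b₂` when `a = 0`.
  obtain ⟨A₁, hA₁, h₁⟩ : ∃ A, 0 < A ∧ L * B ^ 2 * (1 / n * ∑ i, w i) ^ 2 ≤ A :=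
    ⟨_, lt_max_of_lt_right one_pos, le_max_left _ _⟩
  obtain ⟨A₂, hA₂, h₂⟩ : ∃ A, 0 < A ∧
      2 * L * B * (1 / n * ∑ i, w i * (κ * L * C * a i)) / (1 - q) ≤ A :=
    ⟨_, lt_max_of_lt_right one_pos, le_max_left _ _⟩
  obtain ⟨A₃, hA₃, h₃⟩ : ∃ A, 0 < A ∧
      2 * L * B ^ 2 * (1 / n * (κ * L ^ 2 * C) * ∑ i, w i ^ 2) / (1 - q) ≤ A :=
    ⟨_, lt_max_of_lt_right one_pos, le_max_left _ _⟩
  refine ⟨A₁, A₂, A₃, hA₁, hA₂, hA₃, fun K hK δ hδ α hα => ?_⟩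
  have hK : (0 : ℝ) < K := by exact_mod_cast hK
  have hc0 : ∀ i k, 0 ≤ α i k * δ i k := fun i k => by rw [hα]; have := hw i; positivity
  have hc : ∀ i k, α i k * δ i k ≤ w i * (B / K ^ θ) := fun i k => by
    have hβ : 0 ≤ w i * (B / K ^ θ) := by have := hw i; positivity
    rw [hα, mul_div_assoc]
    rcases hδ i k with h | h <;> simp [h, hβ]
  refine ⟨?_, ?_, ?_⟩
  · calc _ ≤ L * (K * (B / K ^ θ) ^ 2 * (1 / n * ∑ i, w i) ^ 2) := by
          gcongr; exact sum_sq_weighted_sum_le hp hc0 hc K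
      _ = L * B ^ 2 * (1 / n * ∑ i, w i) ^ 2 / K ^ (2 * θ - 1) := by
          rw [mul_div_rpow_sq hK]; ring
      _ ≤ A₁ / K ^ (2 * θ - 1) := by gcongr
  · calc _ ≤ 2 * L * (B / K ^ θ * (1 / n * ∑ i, w i * (κ * L * C * a i)) / (1 - q)) := by
          gcongr; exact sum_weighted_sum_mul_geometric_le hp hq0.le hq1 hg hc0 hc K
      _ = 2 * L * B * (1 / n * ∑ i, w i * (κ * L * C * a i)) / (1 - q) / K ^ θ := by ring
      _ ≤ A₂ / K ^ θ := by gcongr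
  · calc _ ≤ 2 * L * (K * (B / K ^ θ) ^ 2 * (1 / n * (κ * L ^ 2 * C) * ∑ i, w i ^ 2) / (1 - q)) := by
          gcongr; exact sum_weighted_sum_mul_discounted_le hp (by positivity) hq0.le hq1 hc0 hc K
      _ = 2 * L * B ^ 2 * (1 / n * (κ * L ^ 2 * C) * ∑ i, w i ^ 2) / (1 - q) / K ^ (2 * θ - 1) := by
          rw [mul_div_rpow_sq hK]; ring
      _ ≤ A₃ / K ^ (2 * θ - 1) := by gcongr

/-- Lemma 4: for constant step-sizes `α_i[k] = w_i B / K^θ`, there exist constants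
`A₁, A₂, A₃ > 0` (independent of `K` and of the activation indicators) such that
`b₁[K] ≤ A₁/K^{2θ−1}`, `b₂[K] ≤ A₂/K^θ`, and `b₃[K] ≤ A₃/K^{2θ−1}`. -/
theorem stmt_6
    {n : ℕ} (hn : 1 ≤ n)
    {κ L C q : ℝ} (hκ : 0 < κ) (hL : 0 < L) (hC : 0 < C) (hq : q ∈ Set.Ioo (0:ℝ) 1)
    (a : Fin n → ℝ) (ha : ∀ i, 0 ≤ a i)
    {θ B : ℝ} (hθ : θ ∈ Set.Ioo (0:ℝ) 1) (hB : 0 < B)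
    (w : Fin n → ℝ) (hw : ∀ i, 1 ≤ w i) :
    ∃ A₁ A₂ A₃ : ℝ, 0 < A₁ ∧ 0 < A₂ ∧ 0 < A₃ ∧
      ∀ K : ℕ, 1 ≤ K →
      ∀ δ : Fin n → ℕ → ℕ, (∀ i k, δ i k = 0 ∨ δ i k = 1) →
      ∀ α : Fin n → ℕ → ℝ, (∀ i k, α i k = w i * B / (K : ℝ) ^ θ) →
        (L * ∑ k ∈ Finset.range K,
            ((1 / (n : ℝ)) * ∑ i, α i k * (δ i k : ℝ)) ^ 2
          ≤ A₁ / (K : ℝ) ^ (2 * θ - 1)) ∧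
        (2 * L * ∑ k ∈ Finset.range K,
            (1 / (n : ℝ)) * ∑ i, α i k * (δ i k : ℝ) * (κ * L * C * a i * q ^ k)
          ≤ A₂ / (K : ℝ) ^ θ) ∧
        (2 * L * ∑ k ∈ Finset.range K,
            (1 / (n : ℝ)) * ∑ i, α i k * (δ i k : ℝ) *
              (κ * L ^ 2 * C *
                ∑ s ∈ Finset.range (k + 1), q ^ (k - s) * (α i s * (δ i s : ℝ)))
          ≤ A₃ / (K : ℝ) ^ (2 * θ - 1)) :=
  stmt_6_general hκ hL hC hq a ha hB w hw
end

section
/- Let θ ∈ (1/2, 1), B > 0 and w_1,…,w_n ≥ 1. Suppose the activation indicators satisfy δ_i[0] = 1 for every i, define c_i[k] := ∑_{ℓ=0}^k δ_i[ℓ], and suppose the step-sizes are α_i[k] := w_i B / (c_i[k])^θ. Then there exists a constant A > 0 such that b_1[K] + b_2[K] + b_3[K] ≤ A for all integers K ≥ 1. -/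
/-!
Write `x_i[k] = α_i[k] δ_i[k]`. At the activation times of agent `i` the counter `c_i[k]` takes
pairwise distinct positive values, so `∑_k x_i[k]² ≤ (w_i B)² ∑_m m^(-2θ)`, which is finite because
`2θ > 1`; moreover `|x_i[k]| ≤ |w_i B|`. The squared average in `b₁` is at most the average of the
squares; in `b₂` the bounded `x_i[k]` meet the geometric weights `q^k`; in `b₃`, AM–GM
`x_k x_s ≤ (x_k² + x_s²)/2` together with the row and column sums of the kernel `q^(k-s)` being at
most `(1-q)⁻¹` bounds the convolution by `(1-q)⁻¹ ∑_k x_i[k]²`. So all three sums are bounded in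
absolute value uniformly in `K`.
-/

open Finset

def activationCount (δ : ℕ → ℕ) (k : ℕ) : ℕ := ∑ ℓ ∈ range (k + 1), δ ℓ

/-- The paper's `α_i[k] δ_i[k]`, with `W = w_i B` and `c_i[k] = activationCount δ_i k`. -/
noncomputable def activeStep (W θ : ℝ) (δ : ℕ → ℕ) (k : ℕ) : ℝ :=
  W / (activationCount δ k : ℝ) ^ θ * δ k

section ActivationCount

variable (δ : ℕ → ℕ)

theorem one_le_activationCount {k : ℕ} (hk : δ k ≠ 0) : 1 ≤ activationCount δ k :=
  (Nat.one_le_iff_ne_zero.2 hk).trans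
    (single_le_sum (fun _ _ => Nat.zero_le _) (self_mem_range_succ k))

theorem activationCount_strictMonoOn : StrictMonoOn (activationCount δ) {k | δ k ≠ 0} := by
  intro j _ k hk hjk
  exact sum_lt_sum_of_subset (range_subset_range.2 (by omega)) (self_mem_range_succ k)
    (by simp only [mem_range]; omega) (Nat.pos_of_ne_zero hk) (fun _ _ _ => Nat.zero_le _)

end ActivationCount

section ActiveStep

variable {δ : ℕ → ℕ} {θ : ℝ}

theorem abs_activeStep_le (hδ : ∀ k, δ k = 0 ∨ δ k = 1) (hθ : 0 ≤ θ) (W : ℝ) (k : ℕ) :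
    |activeStep W θ δ k| ≤ |W| := by
  rcases hδ k with h | h
  · simp [activeStep, h]
  · have hc : (1 : ℝ) ≤ (activationCount δ k : ℝ) ^ θ :=
      Real.one_le_rpow (by exact_mod_cast one_le_activationCount δ (by omega)) hθ
    rw [activeStep, h, Nat.cast_one, mul_one, abs_div, abs_of_pos (zero_lt_one.trans_le hc)]
    exact div_le_self (abs_nonneg W) hc

theorem sum_activeStep_sq_le (hδ : ∀ k, δ k = 0 ∨ δ k = 1) (hθ : 1 / 2 < θ) (W : ℝ) (K : ℕ) :
    ∑ k ∈ range K, activeStep W θ δ k ^ 2 ≤ W ^ 2 * ∑' m : ℕ, ((m : ℝ) ^ (2 * θ))⁻¹ := by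
  set active := (range K).filter (fun k => δ k = 1)
  have hterm : ∀ k, activeStep W θ δ k ^ 2 =
      if δ k = 1 then W ^ 2 * ((activationCount δ k : ℝ) ^ (2 * θ))⁻¹ else 0 := by
    intro k
    rcases hδ k with h | h
    · simp [activeStep, h]
    · rw [if_pos h, activeStep, h, Nat.cast_one, mul_one, mul_comm 2 θ,
        Real.rpow_mul (Nat.cast_nonneg _), Real.rpow_two, div_pow, div_eq_mul_inv]
  have hinj : Set.InjOn (activationCount δ) active :=
    ((activationCount_strictMonoOn δ).mono fun k hk => by
      simp only [active, coe_filter, Set.mem_ofPred_eq] at hk ⊢; omega).injOn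
  calc ∑ k ∈ range K, activeStep W θ δ k ^ 2
      = W ^ 2 * ∑ k ∈ active, ((activationCount δ k : ℝ) ^ (2 * θ))⁻¹ := by
        rw [mul_sum, sum_filter]
        exact sum_congr rfl fun k _ => hterm k
    _ = W ^ 2 * ∑ m ∈ active.image (activationCount δ), ((m : ℝ) ^ (2 * θ))⁻¹ := by
        rw [sum_image hinj]
    _ ≤ W ^ 2 * ∑' m : ℕ, ((m : ℝ) ^ (2 * θ))⁻¹ := by
        gcongr
        exact (Real.summable_nat_rpow_inv.2 (by linarith)).sum_le_tsum _
          fun _ _ => by positivity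

end ActiveStep

section Geometric

variable {q : ℝ}

theorem sum_range_pow_le_inv_one_sub (hq0 : 0 ≤ q) (hq1 : q < 1) (K : ℕ) :
    ∑ k ∈ range K, q ^ k ≤ (1 - q)⁻¹ := by
  rw [range_eq_Ico]
  simpa using geom_sum_Ico_le_of_lt_one (m := 0) (n := K) hq0 hq1

theorem sum_mul_geometric_conv_le (hq0 : 0 ≤ q) (hq1 : q < 1) (x : ℕ → ℝ) (K : ℕ) :
    ∑ k ∈ range K, x k * ∑ s ∈ range (k + 1), q ^ (k - s) * x s ≤
      (1 - q)⁻¹ * ∑ k ∈ range K, x k ^ 2 := by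
  have hamgm : ∀ k s, x k * (q ^ (k - s) * x s) ≤
      x k ^ 2 / 2 * q ^ (k - s) + x s ^ 2 / 2 * q ^ (k - s) := fun k s => by
    have := pow_nonneg hq0 (k - s)
    nlinarith [sq_nonneg (x k - x s)]
  have hrow : ∀ k, ∑ s ∈ range (k + 1), q ^ (k - s) ≤ (1 - q)⁻¹ := fun k => by
    have hreflect := sum_range_reflect (fun j => q ^ j) (k + 1)
    rw [add_tsub_cancel_right] at hreflect
    exact hreflect ▸ sum_range_pow_le_inv_one_sub hq0 hq1 (k + 1)
  have hcol : ∀ s, ∑ k ∈ Ico s K, q ^ (k - s) ≤ (1 - q)⁻¹ := fun s => by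
    rw [sum_Ico_eq_sum_range]
    simpa using sum_range_pow_le_inv_one_sub hq0 hq1 (K - s)
  have hswap : ∑ k ∈ range K, ∑ s ∈ range (k + 1), x s ^ 2 / 2 * q ^ (k - s) =
      ∑ s ∈ range K, ∑ k ∈ Ico s K, x s ^ 2 / 2 * q ^ (k - s) := by
    simpa only [range_eq_Ico] using (sum_Ico_Ico_comm 0 K _).symm
  calc ∑ k ∈ range K, x k * ∑ s ∈ range (k + 1), q ^ (k - s) * x s
      ≤ ∑ k ∈ range K, ∑ s ∈ range (k + 1),
          (x k ^ 2 / 2 * q ^ (k - s) + x s ^ 2 / 2 * q ^ (k - s)) := by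
        simp only [mul_sum]
        gcongr with k _ s _
        exact hamgm k s
    _ = ∑ k ∈ range K, x k ^ 2 / 2 * ∑ s ∈ range (k + 1), q ^ (k - s) +
          ∑ s ∈ range K, x s ^ 2 / 2 * ∑ k ∈ Ico s K, q ^ (k - s) := by
        simp only [sum_add_distrib, hswap, mul_sum]
    _ ≤ ∑ k ∈ range K, x k ^ 2 / 2 * (1 - q)⁻¹ + ∑ s ∈ range K, x s ^ 2 / 2 * (1 - q)⁻¹ := by
        gcongr with k _ s _
        exacts [hrow k, hcol s]
    _ = (1 - q)⁻¹ * ∑ k ∈ range K, x k ^ 2 := by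
        rw [← sum_add_distrib, mul_sum]
        exact sum_congr rfl fun k _ => by ring

theorem sum_abs_mul_geometric_le (hq0 : 0 ≤ q) (hq1 : q < 1) {x : ℕ → ℝ} {M : ℝ}
    (hM : ∀ k, |x k| ≤ M) (c : ℝ) (K : ℕ) :
    ∑ k ∈ range K, |x k * (c * q ^ k)| ≤ M * |c| * (1 - q)⁻¹ := by
  have hM0 : 0 ≤ M := (abs_nonneg _).trans (hM 0)
  calc ∑ k ∈ range K, |x k * (c * q ^ k)| ≤ ∑ k ∈ range K, M * |c| * q ^ k := by
        gcongr with k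
        rw [abs_mul, abs_mul, abs_pow, abs_of_nonneg hq0, ← mul_assoc]
        gcongr
        exact hM k
    _ = M * |c| * ∑ k ∈ range K, q ^ k := by rw [mul_sum]
    _ ≤ M * |c| * (1 - q)⁻¹ := by gcongr; exact sum_range_pow_le_inv_one_sub hq0 hq1 K

theorem sum_abs_mul_geometric_conv_le (hq0 : 0 ≤ q) (hq1 : q < 1) (x : ℕ → ℝ) (c : ℝ) (K : ℕ) :
    ∑ k ∈ range K, |x k * (c * ∑ s ∈ range (k + 1), q ^ (k - s) * x s)| ≤
      |c| * ((1 - q)⁻¹ * ∑ k ∈ range K, x k ^ 2) := by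
  calc ∑ k ∈ range K, |x k * (c * ∑ s ∈ range (k + 1), q ^ (k - s) * x s)|
      ≤ ∑ k ∈ range K, |c| * (|x k| * ∑ s ∈ range (k + 1), q ^ (k - s) * |x s|) := by
        gcongr with k
        rw [abs_mul, abs_mul, mul_left_comm]
        gcongr
        refine (abs_sum_le_sum_abs _ _).trans_eq (sum_congr rfl fun s _ => ?_)
        rw [abs_mul, abs_pow, abs_of_nonneg hq0]
    _ ≤ |c| * ((1 - q)⁻¹ * ∑ k ∈ range K, |x k| ^ 2) := by
        rw [← mul_sum]
        gcongr
        exact sum_mul_geometric_conv_le hq0 hq1 (fun k => |x k|) K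
    _ = |c| * ((1 - q)⁻¹ * ∑ k ∈ range K, x k ^ 2) := by simp only [sq_abs]

end Geometric

section Averages

variable {ι : Type*} [Fintype ι]

theorem sum_sq_mean_le (x : ι → ℕ → ℝ) (K : ℕ) :
    ∑ k ∈ range K, ((1 / (Fintype.card ι : ℝ)) * ∑ i, x i k) ^ 2 ≤
      (1 / (Fintype.card ι : ℝ)) * ∑ i, ∑ k ∈ range K, x i k ^ 2 := by
  calc ∑ k ∈ range K, ((1 / (Fintype.card ι : ℝ)) * ∑ i, x i k) ^ 2
      ≤ ∑ k ∈ range K, (1 / (Fintype.card ι : ℝ)) * ∑ i, x i k ^ 2 := by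
        gcongr with k
        simpa only [one_div_mul_eq_div, card_univ] using
          sum_div_card_sq_le_sum_sq_div_card (s := univ) (f := fun i => x i k)
    _ = (1 / (Fintype.card ι : ℝ)) * ∑ i, ∑ k ∈ range K, x i k ^ 2 := by
        rw [← mul_sum, sum_comm]

theorem abs_sum_mul_sum_le {c : ℝ} (hc : 0 ≤ c) (y : ι → ℕ → ℝ) (K : ℕ) :
    |∑ k ∈ range K, c * ∑ i, y i k| ≤ c * ∑ i, ∑ k ∈ range K, |y i k| := by
  rw [← mul_sum, sum_comm, abs_mul, abs_of_nonneg hc]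
  gcongr
  exact (abs_sum_le_sum_abs _ _).trans (sum_le_sum fun i _ => abs_sum_le_sum_abs _ _)

end Averages

theorem mul_le_abs_mul_of_abs_le {a b B : ℝ} (h : |b| ≤ B) : a * b ≤ |a| * B :=
  (le_abs_self _).trans (abs_mul a b ▸ mul_le_mul_of_nonneg_left h (abs_nonneg a))

theorem stmt_7_general
    {n : ℕ}
    {κ L C q : ℝ} (hq : q ∈ Set.Ioo (0:ℝ) 1)
    (a : Fin n → ℝ)
    {θ B : ℝ} (hθ : θ ∈ Set.Ioo (1/2 : ℝ) 1)
    (w : Fin n → ℝ)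
    (δ : Fin n → ℕ → ℕ) (hδ : ∀ i k, δ i k = 0 ∨ δ i k = 1)
    (α : Fin n → ℕ → ℝ)
    (hα : ∀ i k, α i k =
      w i * B / ((∑ ℓ ∈ Finset.range (k + 1), δ i ℓ : ℕ) : ℝ) ^ θ) :
    ∃ A : ℝ, 0 < A ∧
      ∀ K : ℕ, 1 ≤ K →
        L * (∑ k ∈ Finset.range K,
            ((1 / (n : ℝ)) * ∑ i, α i k * (δ i k : ℝ)) ^ 2)
        + 2 * L * (∑ k ∈ Finset.range K,
            (1 / (n : ℝ)) * ∑ i, α i k * (δ i k : ℝ) * (κ * L * C * a i * q ^ k))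
        + 2 * L * (∑ k ∈ Finset.range K,
            (1 / (n : ℝ)) * ∑ i, α i k * (δ i k : ℝ) *
              (κ * L ^ 2 * C *
                ∑ s ∈ Finset.range (k + 1), q ^ (k - s) * (α i s * (δ i s : ℝ))))
        ≤ A := by
  obtain ⟨hq0, hq1⟩ := hq
  set x : Fin n → ℕ → ℝ := fun i k => activeStep (w i * B) θ (δ i) k
  have hx : ∀ i k, α i k * δ i k = x i k := fun i k => by rw [hα]; rfl
  simp only [hx]
  set Z := ∑' m : ℕ, ((m : ℝ) ^ (2 * θ))⁻¹
  have hsq : ∀ i K, ∑ k ∈ range K, x i k ^ 2 ≤ (w i * B) ^ 2 * Z :=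
    fun i => sum_activeStep_sq_le (hδ i) hθ.1 (w i * B)
  have habs : ∀ i k, |x i k| ≤ |w i * B| :=
    fun i => abs_activeStep_le (hδ i) (by linarith [hθ.1]) (w i * B)
  set A₁ := (1 / (n : ℝ)) * ∑ i, (w i * B) ^ 2 * Z with hA₁
  set A₂ := (1 / (n : ℝ)) * ∑ i, |w i * B| * |κ * L * C * a i| * (1 - q)⁻¹ with hA₂
  set A₃ := (1 / (n : ℝ)) * ∑ i, |κ * L ^ 2 * C| * ((1 - q)⁻¹ * ((w i * B) ^ 2 * Z)) with hA₃
  refine ⟨|L| * A₁ + |2 * L| * A₂ + |2 * L| * A₃ + 1, by positivity, fun K _ => ?_⟩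
  have h₁ : |∑ k ∈ range K, ((1 / (n : ℝ)) * ∑ i, x i k) ^ 2| ≤ A₁ := by
    rw [abs_of_nonneg (by positivity)]
    refine (Fintype.card_fin n ▸ sum_sq_mean_le x K).trans ?_
    rw [hA₁]
    gcongr with i
    exact hsq i K
  have h₂ : |∑ k ∈ range K, (1 / (n : ℝ)) * ∑ i, x i k * (κ * L * C * a i * q ^ k)| ≤ A₂ := by
    refine (abs_sum_mul_sum_le (by positivity) _ K).trans ?_
    rw [hA₂]
    gcongr with i
    exact sum_abs_mul_geometric_le hq0.le hq1 (habs i) _ K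
  have h₃ : |∑ k ∈ range K, (1 / (n : ℝ)) * ∑ i, x i k *
      (κ * L ^ 2 * C * ∑ s ∈ range (k + 1), q ^ (k - s) * x i s)| ≤ A₃ := by
    refine (abs_sum_mul_sum_le (by positivity) _ K).trans ?_
    rw [hA₃]
    gcongr with i
    exact (sum_abs_mul_geometric_conv_le hq0.le hq1 (x i) _ K).trans (by gcongr; exact hsq i K)
  linarith [mul_le_abs_mul_of_abs_le (a := L) h₁, mul_le_abs_mul_of_abs_le (a := 2 * L) h₂,
    mul_le_abs_mul_of_abs_le (a := 2 * L) h₃]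

/-- Lemma 5: with diminishing step-sizes `α_i[k] = w_i B / (c_i[k])^θ`, `θ ∈ (1/2, 1)`,
there is a constant `A > 0` with `b₁[K] + b₂[K] + b₃[K] ≤ A` for all `K ≥ 1`. -/
theorem stmt_7
    {n : ℕ} (hn : 1 ≤ n)
    {κ L C q : ℝ} (hκ : 0 < κ) (hL : 0 < L) (hC : 0 < C) (hq : q ∈ Set.Ioo (0:ℝ) 1)
    (a : Fin n → ℝ) (ha : ∀ i, 0 ≤ a i)
    {θ B : ℝ} (hθ : θ ∈ Set.Ioo (1/2 : ℝ) 1) (hB : 0 < B)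
    (w : Fin n → ℝ) (hw : ∀ i, 1 ≤ w i)
    (δ : Fin n → ℕ → ℕ) (hδ : ∀ i k, δ i k = 0 ∨ δ i k = 1) (hδ0 : ∀ i, δ i 0 = 1)
    (α : Fin n → ℕ → ℝ)
    (hα : ∀ i k, α i k =
      w i * B / ((∑ ℓ ∈ Finset.range (k + 1), δ i ℓ : ℕ) : ℝ) ^ θ) :
    ∃ A : ℝ, 0 < A ∧
      ∀ K : ℕ, 1 ≤ K →
        L * (∑ k ∈ Finset.range K,
            ((1 / (n : ℝ)) * ∑ i, α i k * (δ i k : ℝ)) ^ 2)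
        + 2 * L * (∑ k ∈ Finset.range K,
            (1 / (n : ℝ)) * ∑ i, α i k * (δ i k : ℝ) * (κ * L * C * a i * q ^ k))
        + 2 * L * (∑ k ∈ Finset.range K,
            (1 / (n : ℝ)) * ∑ i, α i k * (δ i k : ℝ) *
              (κ * L ^ 2 * C *
                ∑ s ∈ Finset.range (k + 1), q ^ (k - s) * (α i s * (δ i s : ℝ))))
        ≤ A :=
  stmt_7_general hq a hθ w δ hδ α hα
end

section
/- Let θ ∈ (1/2, 1), B > 0, w_1,…,w_n ≥ 1, and let τ̄ ≥ 1 be an integer. Suppose the activation indicators satisfy δ_i[0] = 1 for every i and, for every i and every k ∈ ℕ, at least one of δ_i[k], δ_i[k+1], …, δ_i[k+τ̄−1] equals 1; define c_i[k] := ∑_{ℓ=0}^k δ_i[ℓ] and α_i[k] := w_i B / (c_i[k])^θ. Suppose moreover that for every k ∈ ℕ there exists i with δ_i[k] = 1. Then for all k ∈ ℕ, B / (n (k+1)^θ) ≤ (1/n) ∑_{i=1}^n α_i[k] δ_i[k] ≤ ( (1/n) ∑_{i=1}^n w_i ) · B · τ̄^θ / (k+1)^θ. -/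
/-!
Write `c[k] = ∑_{ℓ ≤ k} δ[ℓ]` for the activation count of one agent. Since `δ[0] = 1` and every
window of `τ̄` consecutive indices contains an activation, the windows starting at
`1, 1 + τ̄, 1 + 2τ̄, …` give `k + 1 ≤ τ̄ c[k]`, while `c[k] ≤ k + 1` trivially. Monotonicity of
`x ↦ x^θ` turns these into `B / (k+1)^θ ≤ α[k] ≤ w B τ̄^θ / (k+1)^θ`. Averaging over the agents,
the lower bound keeps a single active agent and the upper bound uses `δ ≤ 1`.
-/

open Finset

section ActivationCount

variable {τ : ℕ} {δ : ℕ → ℕ}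

theorem sum_range_succ_le_of_le_one (hδ : ∀ ℓ, δ ℓ ≤ 1) (k : ℕ) :
    ∑ ℓ ∈ range (k + 1), δ ℓ ≤ k + 1 := by
  simpa using sum_le_card_nsmul (range (k + 1)) δ 1 fun ℓ _ => hδ ℓ

theorem succ_le_sum_range_one_add_mul (h0 : 1 ≤ δ 0)
    (hgap : ∀ k, ∃ j < τ, 1 ≤ δ (k + j)) (m : ℕ) :
    m + 1 ≤ ∑ ℓ ∈ range (1 + τ * m), δ ℓ := by
  induction m with
  | zero => simpa using h0
  | succ m ih =>
    obtain ⟨j, hj, hδj⟩ := hgap (1 + τ * m)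
    have hwindow : 1 ≤ ∑ x ∈ range τ, δ (1 + τ * m + x) :=
      hδj.trans (single_le_sum (f := fun x => δ (1 + τ * m + x)) (fun _ _ => Nat.zero_le _)
        (mem_range.mpr hj))
    rw [mul_add_one, ← add_assoc, sum_range_add]
    omega

theorem succ_le_mul_sum_range_succ (h0 : 1 ≤ δ 0)
    (hgap : ∀ k, ∃ j < τ, 1 ≤ δ (k + j)) (k : ℕ) :
    k + 1 ≤ τ * ∑ ℓ ∈ range (k + 1), δ ℓ := by
  have hτ : 0 < τ := by
    obtain ⟨j, hj, -⟩ := hgap 0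
    exact j.zero_le.trans_lt hj
  have hmono : ∑ ℓ ∈ range (1 + τ * (k / τ)), δ ℓ ≤ ∑ ℓ ∈ range (k + 1), δ ℓ :=
    sum_le_sum_of_subset (range_subset_range.mpr (by linarith [Nat.mul_div_le k τ]))
  calc k + 1 ≤ τ * (k / τ + 1) := by linarith [Nat.lt_mul_div_succ k hτ]
    _ ≤ τ * ∑ ℓ ∈ range (k + 1), δ ℓ :=
      Nat.mul_le_mul_left τ ((succ_le_sum_range_one_add_mul h0 hgap _).trans hmono)

end ActivationCount

section StepSize

variable {θ a : ℝ} {τ : ℕ} {δ : ℕ → ℕ}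

theorem div_succ_rpow_le_div_sum_range_rpow (hθ : 0 ≤ θ) (ha : 0 ≤ a) (h0 : 1 ≤ δ 0)
    (hδ : ∀ ℓ, δ ℓ ≤ 1) (k : ℕ) :
    a / ((k : ℝ) + 1) ^ θ ≤ a / ((∑ ℓ ∈ range (k + 1), δ ℓ : ℕ) : ℝ) ^ θ := by
  have hpos : 0 < ∑ ℓ ∈ range (k + 1), δ ℓ :=
    h0.trans (single_le_sum (fun _ _ => Nat.zero_le _) (mem_range.mpr k.succ_pos))
  gcongr
  exact_mod_cast sum_range_succ_le_of_le_one hδ k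

theorem div_sum_range_rpow_le_mul_rpow_div_succ_rpow (hθ : 0 ≤ θ) (ha : 0 ≤ a) (h0 : 1 ≤ δ 0)
    (hgap : ∀ k, ∃ j < τ, 1 ≤ δ (k + j)) (k : ℕ) :
    a / ((∑ ℓ ∈ range (k + 1), δ ℓ : ℕ) : ℝ) ^ θ ≤ a * (τ : ℝ) ^ θ / ((k : ℝ) + 1) ^ θ := by
  set c := ∑ ℓ ∈ range (k + 1), δ ℓ
  have hτc : k + 1 ≤ τ * c := succ_le_mul_sum_range_succ h0 hgap k
  have hc : (0 : ℝ) < c := by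
    exact_mod_cast Nat.pos_of_ne_zero fun h => by simp [h] at hτc
  have hpow : ((k : ℝ) + 1) ^ θ ≤ (τ : ℝ) ^ θ * (c : ℝ) ^ θ := by
    rw [← Real.mul_rpow (Nat.cast_nonneg τ) hc.le]
    gcongr
    exact_mod_cast hτc
  rw [div_le_div_iff₀ (by positivity) (by positivity)]
  calc a * ((k : ℝ) + 1) ^ θ ≤ a * ((τ : ℝ) ^ θ * (c : ℝ) ^ θ) := by gcongr
    _ = a * (τ : ℝ) ^ θ * (c : ℝ) ^ θ := by ring

end StepSize

section Average

variable {ι : Type*} [Fintype ι] {f : ι → ℝ}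

theorem div_le_one_div_mul_sum_of_le (n : ℕ) (hf : ∀ i, 0 ≤ f i) {b : ℝ} (i₀ : ι)
    (h : b ≤ f i₀) : b / n ≤ 1 / n * ∑ i, f i := by
  rw [one_div_mul_eq_div]
  gcongr
  exact h.trans (single_le_sum (fun i _ => hf i) (mem_univ i₀))

theorem one_div_mul_sum_le_of_le (n : ℕ) {w : ι → ℝ} {C : ℝ} (h : ∀ i, f i ≤ w i * C) :
    1 / n * ∑ i, f i ≤ (1 / n * ∑ i, w i) * C := by
  rw [mul_assoc, sum_mul]
  gcongr with i
  exact h i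

end Average

theorem stmt_8_general
    {n : ℕ}
    {θ B : ℝ} (hθ : θ ∈ Set.Ioo (1/2 : ℝ) 1) (hB : 0 < B)
    (w : Fin n → ℝ) (hw : ∀ i, 1 ≤ w i)
    (τ : ℕ)
    (δ : Fin n → ℕ → ℕ) (hδ : ∀ i k, δ i k = 0 ∨ δ i k = 1) (hδ0 : ∀ i, δ i 0 = 1)
    (hgap : ∀ i k, ∃ j, j < τ ∧ δ i (k + j) = 1)
    (α : Fin n → ℕ → ℝ)
    (hα : ∀ i k, α i k =
      w i * B / ((∑ ℓ ∈ Finset.range (k + 1), δ i ℓ : ℕ) : ℝ) ^ θ)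
    (hsome : ∀ k, ∃ i, δ i k = 1)
    (k : ℕ) :
    B / ((n : ℝ) * ((k : ℝ) + 1) ^ θ) ≤ (1 / (n : ℝ)) * ∑ i, α i k * (δ i k : ℝ) ∧
    (1 / (n : ℝ)) * ∑ i, α i k * (δ i k : ℝ) ≤
      ((1 / (n : ℝ)) * ∑ i, w i) * B * (τ : ℝ) ^ θ / ((k : ℝ) + 1) ^ θ := by
  have hθ0 : 0 ≤ θ := by linarith [hθ.1]
  have hδle : ∀ i ℓ, δ i ℓ ≤ 1 := fun i ℓ => by rcases hδ i ℓ with h | h <;> omega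
  have hwB : ∀ i, 0 ≤ w i * B := fun i => mul_nonneg (zero_le_one.trans (hw i)) hB.le
  have hα_lower : ∀ i, B / ((k : ℝ) + 1) ^ θ ≤ α i k := fun i => calc
    B / ((k : ℝ) + 1) ^ θ ≤ w i * B / ((k : ℝ) + 1) ^ θ := by
      gcongr; exact le_mul_of_one_le_left hB.le (hw i)
    _ ≤ α i k := (hα i k).symm ▸
      div_succ_rpow_le_div_sum_range_rpow hθ0 (hwB i) (hδ0 i).ge (hδle i) k
  have hα_upper : ∀ i, α i k ≤ w i * (B * (τ : ℝ) ^ θ / ((k : ℝ) + 1) ^ θ) := fun i =>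
    (hα i k).trans_le <| (div_sum_range_rpow_le_mul_rpow_div_succ_rpow hθ0 (hwB i) (hδ0 i).ge
      (fun m => (hgap i m).imp fun _ h => ⟨h.1, h.2.ge⟩) k).trans_eq (by ring)
  have hα_nonneg : ∀ i, 0 ≤ α i k := fun i => (by positivity : (0 : ℝ) ≤ B / _).trans (hα_lower i)
  constructor
  · obtain ⟨i₀, hi₀⟩ := hsome k
    rw [div_mul_eq_div_div_swap]
    refine div_le_one_div_mul_sum_of_le n
      (fun i => mul_nonneg (hα_nonneg i) (Nat.cast_nonneg _)) i₀ ?_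
    simpa [hi₀] using hα_lower i₀
  · refine (one_div_mul_sum_le_of_le n (C := B * (τ : ℝ) ^ θ / ((k : ℝ) + 1) ^ θ) fun i =>
      ?_).trans_eq (by ring)
    exact (mul_le_of_le_one_right (hα_nonneg i) (by exact_mod_cast hδle i k)).trans (hα_upper i)

/-- Remark 2 (variant): with diminishing step-sizes `α_i[k] = w_i B / (c_i[k])^θ`,
bounded inter-activation gaps `τ̄`, and at least one active agent at every index,
`B/(n (k+1)^θ) ≤ (1/n) ∑_i α_i[k] δ_i[k] ≤ ((1/n) ∑_i w_i) B τ̄^θ / (k+1)^θ`. -/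
theorem stmt_8
    {n : ℕ} (hn : 1 ≤ n)
    {θ B : ℝ} (hθ : θ ∈ Set.Ioo (1/2 : ℝ) 1) (hB : 0 < B)
    (w : Fin n → ℝ) (hw : ∀ i, 1 ≤ w i)
    (τ : ℕ) (hτ : 1 ≤ τ)
    (δ : Fin n → ℕ → ℕ) (hδ : ∀ i k, δ i k = 0 ∨ δ i k = 1) (hδ0 : ∀ i, δ i 0 = 1)
    (hgap : ∀ i k, ∃ j, j < τ ∧ δ i (k + j) = 1)
    (α : Fin n → ℕ → ℝ)
    (hα : ∀ i k, α i k =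
      w i * B / ((∑ ℓ ∈ Finset.range (k + 1), δ i ℓ : ℕ) : ℝ) ^ θ)
    (hsome : ∀ k, ∃ i, δ i k = 1)
    (k : ℕ) :
    B / ((n : ℝ) * ((k : ℝ) + 1) ^ θ) ≤ (1 / (n : ℝ)) * ∑ i, α i k * (δ i k : ℝ) ∧
    (1 / (n : ℝ)) * ∑ i, α i k * (δ i k : ℝ) ≤
      ((1 / (n : ℝ)) * ∑ i, w i) * B * (τ : ℝ) ^ θ / ((k : ℝ) + 1) ^ θ :=
  stmt_8_general hθ hB w hw τ δ hδ hδ0 hgap α hα hsome k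
end

section
/- Let θ ∈ (0,1) and B > 0. There exist constants A_1, A_2, A_3 > 0, depending only on n, μ, M, L, C, q, B, θ and a_1,…,a_n, such that the following holds for every integer K ≥ 1: if the sequences (z_i, x̄) satisfy the assumptions in the context with δ_i[k] = 1 for all i and all k (every agent active at every index), and with constant step-sizes α_i[k] = B / K^θ for all i and k, with the gradient bound and the consensus bound, then p̄_i^{(K)} = 1/n for every i, the minimizer x*_K of the reweighted objective equals x*, and (1/K) ∑_{k=0}^{K−1} ‖x̄[k] − x*‖² ≤ n(A_1 + A_3)/(2μB K^θ) + nA_2/(2μB K) + n‖x̄[0] − x*‖²/(2μB K^{1−θ}). -/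
open Finset
open scoped RealInnerProductSpace

/-!
With every agent active and the common step `c = B / K ^ θ`, each agent has weight `1 / n`, so
the reweighted objective is `F / n`, whose minimizer is `x*` because `F` is strongly convex.

For the rate, expand `‖x̄[k+1] - x*‖²` along the averaged recursion. Strong monotonicity of
`∑ ∇f_i` together with `∑ ∇f_i(x*) = 0` produces the descent term `2 c μ ‖x̄[k] - x*‖²`;
replacing `∇f_i(z_i[k])` by `∇f_i(x̄[k])` costs `M ‖z_i[k] - x̄[k]‖ ‖x̄[k] - x*‖`, where
`‖x̄[k] - x*‖ ≤ L / μ` by the gradient bound, and the step itself costs `c² L²`. Summing over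
`k` telescopes, the consensus bound gives
`∑_k ∑_i ‖z_i[k] - x̄[k]‖ ≤ C ∑ a_i / (1 - q) + K n C L c / (1 - q)`, and dividing by `2 c μ K`
yields the three terms of the bound.
-/

theorem sum_range_le_of_le_sub_succ {a b r : ℕ → ℝ} {K : ℕ}
    (h : ∀ k, a k ≤ r k - r (k + 1) + b k) (hK : 0 ≤ r K) :
    ∑ k ∈ range K, a k ≤ r 0 + ∑ k ∈ range K, b k := by
  have hsum := sum_le_sum fun k (_ : k ∈ range K) => h k
  rw [sum_add_distrib, sum_range_sub'] at hsum
  linarith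

theorem geom_sum_le_one_div {q : ℝ} (hq0 : 0 ≤ q) (hq1 : q < 1) (n : ℕ) :
    ∑ i ∈ range n, q ^ i ≤ 1 / (1 - q) := by
  rw [range_eq_Ico]
  simpa using geom_sum_Ico_le_of_lt_one (m := 0) (n := n) hq0 hq1

theorem sum_range_succ_pow_sub_le {q : ℝ} (hq0 : 0 ≤ q) (hq1 : q < 1) (k : ℕ) :
    ∑ s ∈ range (k + 1), q ^ (k - s) ≤ 1 / (1 - q) := by
  have h := sum_range_reflect (fun j => q ^ j) (k + 1)
  simp only [Nat.add_sub_cancel] at h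
  rw [h]
  exact geom_sum_le_one_div hq0 hq1 (k + 1)

theorem mean_le_of_two_mul_mul_sum_le {n K : ℕ} {μ B θ r S P Q A₁ A₂ A₃ : ℝ} (hn : 1 ≤ n)
    (hK : 0 < K) (hμ : 0 < μ) (hB : 0 < B) (hr : 0 ≤ r)
    (hS : 2 * (B / K ^ θ) * μ * S ≤ r + B / K ^ θ * P + K * (B / K ^ θ) ^ 2 * Q)
    (hQ : B ^ 2 * Q ≤ n * (A₁ + A₃)) (hP : B * P ≤ n * A₂) :
    1 / (K : ℝ) * S ≤ n * (A₁ + A₃) / (2 * μ * B * (K : ℝ) ^ θ) + n * A₂ / (2 * μ * B * K)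
      + n * r / (2 * μ * B * (K : ℝ) ^ (1 - θ)) := by
  have hK' : (0 : ℝ) < K := Nat.cast_pos.mpr hK
  have hT : (0 : ℝ) < (K : ℝ) ^ θ := Real.rpow_pos_of_pos hK' θ
  have hn' : (1 : ℝ) ≤ n := Nat.one_le_cast.mpr hn
  set c := B / (K : ℝ) ^ θ
  have hc : 0 < c := div_pos hB hT
  rw [Real.rpow_sub hK', Real.rpow_one]
  calc 1 / (K : ℝ) * S = 2 * c * μ * S / (2 * c * μ * K) := by field_simp
    _ ≤ (r + c * P + K * c ^ 2 * Q) / (2 * c * μ * K) := by gcongr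
    _ = B ^ 2 * Q / (2 * μ * B * (K : ℝ) ^ θ) + B * P / (2 * μ * B * K)
          + r / (2 * μ * B * (K / (K : ℝ) ^ θ)) := by
        simp only [c]; field_simp; ring
    _ ≤ _ := by gcongr; exact le_mul_of_one_le_left hr hn'

section Consensus

variable {ι E : Type*} [Fintype ι] [SeminormedAddCommGroup E]

theorem sum_range_sum_norm_sub_le {z : ι → ℕ → E} {xbar : ℕ → E} {c C L q : ℝ} {a : ι → ℝ}
    (hc : 0 ≤ c) (hC : 0 ≤ C) (hL : 0 ≤ L) (hq0 : 0 ≤ q) (hq1 : q < 1) (ha : ∀ i, 0 ≤ a i)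
    (hcons : ∀ i k, ‖z i k - xbar k‖ ≤
      C * q ^ k * a i + C * L * ∑ s ∈ range (k + 1), q ^ (k - s) * c) (K : ℕ) :
    ∑ k ∈ range K, ∑ i, ‖z i k - xbar k‖ ≤
      C * (∑ i, a i) / (1 - q) + K * (Fintype.card ι * (C * L * c / (1 - q))) := by
  have hq : 0 < 1 - q := sub_pos.2 hq1
  have hk : ∀ k, ∑ i, ‖z i k - xbar k‖ ≤
      C * (∑ i, a i) * q ^ k + Fintype.card ι * (C * L * c / (1 - q)) := by
    intro k
    have hi : ∀ i, ‖z i k - xbar k‖ ≤ C * a i * q ^ k + C * L * c / (1 - q) := by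
      intro i
      have hgeom : C * L * ∑ s ∈ range (k + 1), q ^ (k - s) * c ≤ C * L * c / (1 - q) := by
        calc C * L * ∑ s ∈ range (k + 1), q ^ (k - s) * c
            = C * L * c * ∑ s ∈ range (k + 1), q ^ (k - s) := by rw [← sum_mul]; ring
          _ ≤ C * L * c * (1 / (1 - q)) := by
            gcongr
            exact sum_range_succ_pow_sub_le hq0 hq1 k
          _ = C * L * c / (1 - q) := mul_one_div _ _
      linarith [hcons i k]
    calc ∑ i, ‖z i k - xbar k‖ ≤ ∑ i, (C * a i * q ^ k + C * L * c / (1 - q)) :=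
          sum_le_sum fun i _ => hi i
      _ = _ := by rw [sum_add_distrib, ← sum_mul, ← mul_sum]; simp
  calc ∑ k ∈ range K, ∑ i, ‖z i k - xbar k‖
      ≤ ∑ k ∈ range K, (C * (∑ i, a i) * q ^ k + Fintype.card ι * (C * L * c / (1 - q))) :=
        sum_le_sum fun k _ => hk k
    _ ≤ C * (∑ i, a i) / (1 - q) + K * (Fintype.card ι * (C * L * c / (1 - q))) := by
        rw [sum_add_distrib, ← mul_sum, sum_const, card_range, nsmul_eq_mul,
          div_eq_mul_one_div (C * ∑ i, a i)]
        have := sum_nonneg fun i (_ : i ∈ univ) => ha i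
        gcongr
        exact geom_sum_le_one_div hq0 hq1 K

end Consensus

section StrongConvexity

variable {E : Type*} [NormedAddCommGroup E] [InnerProductSpace ℝ E] [CompleteSpace E]

theorem ConvexOn.mul_norm_sub_sq_le_inner_sub {g : E → ℝ} {μ : ℝ}
    (hg : ConvexOn ℝ Set.univ fun x => g x - μ / 2 * ‖x‖ ^ 2) {x y gx gy : E}
    (hx : HasGradientAt g gx x) (hy : HasGradientAt g gy y) :
    μ * ‖x - y‖ ^ 2 ≤ ⟪gx - gy, x - y⟫ := by
  set φ : ℝ → ℝ := fun t => g (AffineMap.lineMap y x t) - μ / 2 * ‖AffineMap.lineMap y x t‖ ^ 2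
  have hφ : ConvexOn ℝ Set.univ φ := hg.comp_affineMap (AffineMap.lineMap y x)
  have hderiv : ∀ {t : ℝ} {p gp : E}, AffineMap.lineMap y x t = p → HasGradientAt g gp p →
      HasDerivAt φ (⟪gp, x - y⟫ - μ * ⟪p, x - y⟫) t := by
    rintro t p gp rfl hp
    have hline : HasDerivAt (AffineMap.lineMap y x : ℝ → E) (x - y) t :=
      AffineMap.hasDerivAt_lineMap
    refine ((hp.hasFDerivAt.comp_hasDerivAt t hline).sub
      (hline.norm_sq.const_mul (μ / 2))).congr_deriv ?_
    simp only [InnerProductSpace.toDual_apply_apply]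
    ring
  -- `φ` is convex on `[0, 1]`, so its derivative at `0` is at most its slope, hence at most its
  -- derivative at `1`.
  have hslopes :=
    (hφ.le_slope_of_hasDerivAt trivial trivial zero_lt_one (hderiv (by simp) hy)).trans
      (hφ.slope_le_of_hasDerivAt trivial trivial zero_lt_one (hderiv (by simp) hx))
  rw [inner_sub_left, ← real_inner_self_eq_norm_sq, inner_sub_left]
  linarith

variable {ι : Type*} [Fintype ι] {f : ι → E → ℝ} {μ : ℝ} {xstar : E}

theorem sum_gradient_eq_zero_of_forall_sum_le (hdiff : ∀ i, DifferentiableAt ℝ (f i) xstar)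
    (hmin : ∀ y, ∑ i, f i xstar ≤ ∑ i, f i y) : ∑ i, gradient (f i) xstar = 0 := by
  have hF : HasFDerivAt (fun y => ∑ i, f i y)
      (∑ i, InnerProductSpace.toDual ℝ E (gradient (f i) xstar)) xstar :=
    HasFDerivAt.fun_sum fun i _ => (hdiff i).hasGradientAt.hasFDerivAt
  have hloc : IsLocalMin (fun y => ∑ i, f i y) xstar := Filter.Eventually.of_forall hmin
  have h0 := hloc.hasFDerivAt_eq_zero hF
  rw [← map_sum] at h0
  exact (map_eq_zero_iff _ (InnerProductSpace.toDual ℝ E).injective).mp h0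

theorem card_mul_norm_sub_sq_le_inner_sum_gradient (hdiff : ∀ i, Differentiable ℝ (f i))
    (hsc : ∀ i, ConvexOn ℝ Set.univ fun x => f i x - μ / 2 * ‖x‖ ^ 2)
    (hmin : ∀ y, ∑ i, f i xstar ≤ ∑ i, f i y) (x : E) :
    Fintype.card ι * μ * ‖x - xstar‖ ^ 2 ≤ ⟪∑ i, gradient (f i) x, x - xstar⟫ := by
  have hcrit := sum_gradient_eq_zero_of_forall_sum_le (fun i => hdiff i xstar) hmin
  calc Fintype.card ι * μ * ‖x - xstar‖ ^ 2 = ∑ _i : ι, μ * ‖x - xstar‖ ^ 2 := by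
        rw [sum_const, card_univ, nsmul_eq_mul, mul_assoc]
    _ ≤ ∑ i, ⟪gradient (f i) x - gradient (f i) xstar, x - xstar⟫ :=
        sum_le_sum fun i _ => (hsc i).mul_norm_sub_sq_le_inner_sub
          (hdiff i x).hasGradientAt (hdiff i xstar).hasGradientAt
    _ = ⟪∑ i, gradient (f i) x, x - xstar⟫ := by
        rw [← sum_inner, sum_sub_distrib, hcrit, sub_zero]

theorem eq_of_forall_sum_le [Nonempty ι] (hμ : 0 < μ) (hdiff : ∀ i, Differentiable ℝ (f i))
    (hsc : ∀ i, ConvexOn ℝ Set.univ fun x => f i x - μ / 2 * ‖x‖ ^ 2)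
    (hmin : ∀ y, ∑ i, f i xstar ≤ ∑ i, f i y) {x : E} (hx : ∀ y, ∑ i, f i x ≤ ∑ i, f i y) :
    x = xstar := by
  have h := card_mul_norm_sub_sq_le_inner_sum_gradient hdiff hsc hmin x
  rw [sum_gradient_eq_zero_of_forall_sum_le (fun i => hdiff i x) hx, inner_zero_left] at h
  have hpos : 0 < (Fintype.card ι : ℝ) * μ := mul_pos (by exact_mod_cast Fintype.card_pos) hμ
  rw [← sub_eq_zero, ← norm_eq_zero]
  exact sq_nonpos_iff _ |>.mp (nonpos_of_mul_nonpos_right h hpos)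

theorem mul_norm_sub_le_of_norm_gradient_le [Nonempty ι] (hdiff : ∀ i, Differentiable ℝ (f i))
    (hsc : ∀ i, ConvexOn ℝ Set.univ fun x => f i x - μ / 2 * ‖x‖ ^ 2)
    (hmin : ∀ y, ∑ i, f i xstar ≤ ∑ i, f i y) {x : E} {L : ℝ}
    (hL : ∀ i, ‖gradient (f i) x‖ ≤ L) : μ * ‖x - xstar‖ ≤ L := by
  have hcard : (0 : ℝ) < Fintype.card ι := by exact_mod_cast Fintype.card_pos
  have hsum : ‖∑ i, gradient (f i) x‖ ≤ Fintype.card ι * L := by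
    simpa using (norm_sum_le _ _).trans (sum_le_sum fun i (_ : i ∈ univ) => hL i)
  have h := (card_mul_norm_sub_sq_le_inner_sum_gradient hdiff hsc hmin x).trans
    ((real_inner_le_norm _ _).trans (mul_le_mul_of_nonneg_right hsum (norm_nonneg _)))
  have hL0 : 0 ≤ L := (norm_nonneg _).trans (hL (Classical.arbitrary ι))
  by_contra! hlt
  have hu : 0 < ‖x - xstar‖ := by
    by_contra! h0
    rw [le_antisymm h0 (norm_nonneg _), mul_zero] at hlt
    linarith
  nlinarith [mul_pos hcard (mul_pos hu (sub_pos.2 hlt))]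

theorem card_mul_norm_sub_sq_sub_le_inner_sum_gradient (hdiff : ∀ i, Differentiable ℝ (f i))
    (hsc : ∀ i, ConvexOn ℝ Set.univ fun x => f i x - μ / 2 * ‖x‖ ^ 2)
    (hmin : ∀ y, ∑ i, f i xstar ≤ ∑ i, f i y) {M : ℝ} (z : ι → E) (x : E)
    (hlip : ∀ i, ‖gradient (f i) (z i) - gradient (f i) x‖ ≤ M * ‖z i - x‖) :
    Fintype.card ι * μ * ‖x - xstar‖ ^ 2 - ‖x - xstar‖ * (M * ∑ i, ‖z i - x‖) ≤
      ⟪∑ i, gradient (f i) (z i), x - xstar⟫ := by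
  have hi : ∀ i, ⟪gradient (f i) x, x - xstar⟫ - ‖x - xstar‖ * (M * ‖z i - x‖) ≤
      ⟪gradient (f i) (z i), x - xstar⟫ := by
    intro i
    have h := (real_inner_le_norm (gradient (f i) x - gradient (f i) (z i)) (x - xstar)).trans
      (mul_le_mul_of_nonneg_right ((norm_sub_rev _ _).trans_le (hlip i)) (norm_nonneg _))
    rw [inner_sub_left] at h
    linarith
  have hsum := sum_le_sum fun i (_ : i ∈ univ) => hi i
  rw [sum_sub_distrib, ← sum_inner, ← sum_inner, ← mul_sum, ← mul_sum] at hsum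
  linarith [card_mul_norm_sub_sq_le_inner_sum_gradient hdiff hsc hmin x]

theorem norm_sq_descent_step [Nonempty ι] (hμ : 0 < μ) (hdiff : ∀ i, Differentiable ℝ (f i))
    (hsc : ∀ i, ConvexOn ℝ Set.univ fun x => f i x - μ / 2 * ‖x‖ ^ 2)
    (hmin : ∀ y, ∑ i, f i xstar ≤ ∑ i, f i y) {c M L : ℝ} (hc : 0 ≤ c) (z : ι → E) (x : E)
    (hlip : ∀ i, ‖gradient (f i) (z i) - gradient (f i) x‖ ≤ M * ‖z i - x‖)
    (hgz : ∀ i, ‖gradient (f i) (z i)‖ ≤ L) (hx : μ * ‖x - xstar‖ ≤ L) :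
    2 * c * μ * ‖x - xstar‖ ^ 2 ≤
      ‖x - xstar‖ ^ 2 - ‖x - (Fintype.card ι : ℝ)⁻¹ • ∑ i, c • gradient (f i) (z i) - xstar‖ ^ 2
        + 2 * c * M * L / (Fintype.card ι * μ) * ∑ i, ‖z i - x‖ + c ^ 2 * L ^ 2 := by
  have hinner := card_mul_norm_sub_sq_sub_le_inner_sum_gradient hdiff hsc hmin z x hlip
  set n : ℝ := (Fintype.card ι : ℝ)
  have hn : 0 < n := Nat.cast_pos.mpr Fintype.card_pos
  have hstep : x - n⁻¹ • ∑ i, c • gradient (f i) (z i) - xstar =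
      (x - xstar) - (c / n) • ∑ i, gradient (f i) (z i) := by
    rw [← smul_sum, smul_smul, div_eq_inv_mul]
    abel
  set g := ∑ i, gradient (f i) (z i)
  set S := ∑ i, ‖z i - x‖
  have hMS : 0 ≤ M * S := by
    rw [mul_sum]
    exact sum_nonneg fun i _ => (norm_nonneg _).trans (hlip i)
  have hu : ‖x - xstar‖ * (M * S) ≤ L / μ * (M * S) :=
    mul_le_mul_of_nonneg_right (by rwa [le_div_iff₀' hμ]) hMS
  have hdrift : 2 * c * μ * ‖x - xstar‖ ^ 2 - 2 * c * M * L / (n * μ) * S ≤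
      2 * (c / n) * ⟪x - xstar, g⟫ := by
    calc 2 * c * μ * ‖x - xstar‖ ^ 2 - 2 * c * M * L / (n * μ) * S
        = 2 * (c / n) * (n * μ * ‖x - xstar‖ ^ 2 - L / μ * (M * S)) := by
          field_simp
      _ ≤ 2 * (c / n) * ⟪x - xstar, g⟫ := by
          rw [real_inner_comm]
          gcongr
          linarith
  have hg : (c / n) * ‖g‖ ≤ c * L := by
    have : ‖g‖ ≤ n * L := by
      simpa using (norm_sum_le _ _).trans (sum_le_sum fun i (_ : i ∈ univ) => hgz i)
    calc (c / n) * ‖g‖ ≤ (c / n) * (n * L) := by gcongr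
      _ = c * L := by field_simp
  rw [hstep, norm_sub_sq_real (x - xstar), real_inner_smul_right, norm_smul,
    Real.norm_of_nonneg (by positivity)]
  linarith [pow_le_pow_left₀ (by positivity) hg 2]

theorem two_mul_mul_sum_norm_sub_sq_le [Nonempty ι] (hμ : 0 < μ)
    (hdiff : ∀ i, Differentiable ℝ (f i))
    (hsc : ∀ i, ConvexOn ℝ Set.univ fun x => f i x - μ / 2 * ‖x‖ ^ 2)
    {M : ℝ} (hM : 0 ≤ M) (hlip : ∀ i x y, ‖gradient (f i) x - gradient (f i) y‖ ≤ M * ‖x - y‖)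
    (hmin : ∀ y, ∑ i, f i xstar ≤ ∑ i, f i y)
    {c C L q : ℝ} {a : ι → ℝ} (hc : 0 ≤ c) (hC : 0 ≤ C) (hL : 0 ≤ L) (hq0 : 0 ≤ q) (hq1 : q < 1)
    (ha : ∀ i, 0 ≤ a i) {z : ι → ℕ → E} {xbar : ℕ → E}
    (hrec : ∀ k, xbar (k + 1) =
      xbar k - (Fintype.card ι : ℝ)⁻¹ • ∑ i, c • gradient (f i) (z i k))
    (hgz : ∀ i k, ‖gradient (f i) (z i k)‖ ≤ L) (hgx : ∀ i k, ‖gradient (f i) (xbar k)‖ ≤ L)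
    (hcons : ∀ i k, ‖z i k - xbar k‖ ≤
      C * q ^ k * a i + C * L * ∑ s ∈ range (k + 1), q ^ (k - s) * c) (K : ℕ) :
    2 * c * μ * ∑ k ∈ range K, ‖xbar k - xstar‖ ^ 2 ≤
      ‖xbar 0 - xstar‖ ^ 2 + c * (2 * M * L * C * (∑ i, a i) / (Fintype.card ι * μ * (1 - q)))
        + K * c ^ 2 * (L ^ 2 + 2 * M * C * L ^ 2 / (μ * (1 - q))) := by
  have hn : (0 : ℝ) < Fintype.card ι := Nat.cast_pos.mpr Fintype.card_pos
  have hq : 0 < 1 - q := sub_pos.2 hq1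
  have hstep : ∀ k, 2 * c * μ * ‖xbar k - xstar‖ ^ 2 ≤
      ‖xbar k - xstar‖ ^ 2 - ‖xbar (k + 1) - xstar‖ ^ 2 +
        (2 * c * M * L / (Fintype.card ι * μ) * ∑ i, ‖z i k - xbar k‖ + c ^ 2 * L ^ 2) := by
    intro k
    rw [hrec, ← add_assoc]
    exact norm_sq_descent_step hμ hdiff hsc hmin hc (z · k) (xbar k) (fun i => hlip i _ _)
      (hgz · k) (mul_norm_sub_le_of_norm_gradient_le hdiff hsc hmin (hgx · k))
  have htel := sum_range_le_of_le_sub_succ (K := K) hstep (sq_nonneg _)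
  rw [← mul_sum, sum_add_distrib, ← mul_sum, sum_const, card_range, nsmul_eq_mul] at htel
  have hcoef : 0 ≤ 2 * c * M * L / (Fintype.card ι * μ) := by positivity
  have hcons := mul_le_mul_of_nonneg_left
    (sum_range_sum_norm_sub_le hc hC hL hq0 hq1 ha hcons K) hcoef
  calc 2 * c * μ * ∑ k ∈ range K, ‖xbar k - xstar‖ ^ 2
      ≤ ‖xbar 0 - xstar‖ ^ 2 + 2 * c * M * L / (Fintype.card ι * μ) *
          (C * (∑ i, a i) / (1 - q) + K * (Fintype.card ι * (C * L * c / (1 - q))))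
        + K * (c ^ 2 * L ^ 2) := by linarith
    _ = _ := by field_simp; ring

end StrongConvexity

theorem stmt_10_general
    {n d : ℕ} (hn : 1 ≤ n)
    {μ M : ℝ} (hμ : 0 < μ) (hμM : μ ≤ M)
    (f : Fin n → EuclideanSpace ℝ (Fin d) → ℝ)
    (hdiff : ∀ i, Differentiable ℝ (f i))
    (hsc : ∀ i, ConvexOn ℝ Set.univ (fun x => f i x - μ / 2 * ‖x‖ ^ 2))
    (hlip : ∀ i x y, ‖gradient (f i) x - gradient (f i) y‖ ≤ M * ‖x - y‖)
    (xstar : EuclideanSpace ℝ (Fin d))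
    (hxstar : ∀ y, ∑ i, f i xstar ≤ ∑ i, f i y)
    (L : ℝ) (hL : 0 < L)
    (C q : ℝ) (hC : 0 < C) (hq : q ∈ Set.Ioo (0:ℝ) 1)
    (a : Fin n → ℝ) (ha : ∀ i, 0 ≤ a i)
    {θ B : ℝ} (hB : 0 < B) :
    ∃ A₁ A₂ A₃ : ℝ, 0 < A₁ ∧ 0 < A₂ ∧ 0 < A₃ ∧
      ∀ K : ℕ, 1 ≤ K →
      ∀ δ : Fin n → ℕ → ℕ, (∀ i k, δ i k = 1) →
      ∀ α : Fin n → ℕ → ℝ, (∀ i k, α i k = B / (K : ℝ) ^ θ) →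
      ∀ z : Fin n → ℕ → EuclideanSpace ℝ (Fin d),
      ∀ xbar : ℕ → EuclideanSpace ℝ (Fin d),
      (∀ k, xbar (k + 1) =
        xbar k - ((n : ℝ))⁻¹ • ∑ i, (α i k * (δ i k : ℝ)) • gradient (f i) (z i k)) →
      (∀ i k, ‖gradient (f i) (z i k)‖ ≤ L) →
      (∀ i k, ‖gradient (f i) (xbar k)‖ ≤ L) →
      (∀ i k, ‖z i k - xbar k‖ ≤
        C * q ^ k * a i +
          C * L * ∑ s ∈ Finset.range (k + 1), q ^ (k - s) * (α i s * (δ i s : ℝ))) →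
      (∀ i, 0 < ∑ k ∈ Finset.range K, α i k * (δ i k : ℝ)) →
      ∀ xK : EuclideanSpace ℝ (Fin d),
      (∀ y, ∑ i, ((∑ k ∈ Finset.range K, α i k * (δ i k : ℝ)) /
              (∑ j, ∑ k ∈ Finset.range K, α j k * (δ j k : ℝ))) * f i xK ≤
            ∑ i, ((∑ k ∈ Finset.range K, α i k * (δ i k : ℝ)) /
              (∑ j, ∑ k ∈ Finset.range K, α j k * (δ j k : ℝ))) * f i y) →
      (∀ i, (∑ k ∈ Finset.range K, α i k * (δ i k : ℝ)) /
          (∑ j, ∑ k ∈ Finset.range K, α j k * (δ j k : ℝ)) = 1 / (n : ℝ)) ∧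
      xK = xstar ∧
      (1 / (K : ℝ)) * ∑ k ∈ Finset.range K, ‖xbar k - xstar‖ ^ 2 ≤
        (n : ℝ) * (A₁ + A₃) / (2 * μ * B * (K : ℝ) ^ θ)
          + (n : ℝ) * A₂ / (2 * μ * B * (K : ℝ))
          + (n : ℝ) * ‖xbar 0 - xstar‖ ^ 2 / (2 * μ * B * (K : ℝ) ^ (1 - θ)) := by
  obtain ⟨hq0, hq1⟩ := hq
  have : Nonempty (Fin n) := ⟨⟨0, hn⟩⟩
  have hn0 : (0 : ℝ) < n := Nat.cast_pos.mpr hn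
  have hM : 0 < M := hμ.trans_le hμM
  have hq : 0 < 1 - q := sub_pos.2 hq1
  have ha0 : 0 ≤ ∑ i, a i := sum_nonneg fun i _ => ha i
  -- `1 + ∑ a_i` rather than `∑ a_i` keeps `A₂` positive when every `a_i` vanishes.
  refine ⟨B ^ 2 * L ^ 2 / n, 2 * B * M * L * C * (1 + ∑ i, a i) / (n ^ 2 * μ * (1 - q)),
    2 * B ^ 2 * M * C * L ^ 2 / (n * μ * (1 - q)), by positivity, by positivity, by positivity, ?_⟩
  intro K hK δ hδ α hα z xbar hrec hgz hgx hcons _ xK hxK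
  set c := B / (K : ℝ) ^ θ
  have hc : 0 < c := by positivity
  have hαδ : ∀ i k, α i k * (δ i k : ℝ) = c := fun i k => by simp [hα, hδ, c]
  simp only [hαδ] at hrec hcons hxK ⊢
  have hweight : (∑ k ∈ range K, c) / ∑ _j : Fin n, ∑ k ∈ range K, c = 1 / n := by
    simp only [sum_const, card_range, card_univ, Fintype.card_fin, nsmul_eq_mul]
    field_simp
  refine ⟨fun _ => hweight, ?_, ?_⟩
  · refine eq_of_forall_sum_le hμ hdiff hsc hxstar fun y => ?_
    have h := hxK y
    rw [hweight, ← mul_sum, ← mul_sum] at h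
    exact le_of_mul_le_mul_left h (by positivity)
  · have hmain := two_mul_mul_sum_norm_sub_sq_le hμ hdiff hsc hM.le hlip hxstar
      hc.le hC.le hL.le hq0.le hq1 ha
      (by simpa only [Fintype.card_fin] using hrec) hgz hgx hcons K
    rw [Fintype.card_fin] at hmain
    refine mean_le_of_two_mul_mul_sum_le hn hK hμ hB (sq_nonneg _) hmain ?_ ?_
    · exact le_of_eq (by field_simp)
    · calc B * (2 * M * L * C * (∑ i, a i) / (n * μ * (1 - q)))
          ≤ B * (2 * M * L * C * (1 + ∑ i, a i) / (n * μ * (1 - q))) := by gcongr; linarith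
        _ = _ := by field_simp

/-- Corollary (semi-synchronous gradient push, constant step-size): with all agents
active at every index and constant step-sizes `α_i[k] = B/K^θ`, the weights satisfy
`p̄_i = 1/n`, the reweighted minimizer equals the global minimizer `x*`, and
`(1/K) ∑_{k<K} ‖x̄[k] − x*‖² ≤ n(A₁+A₃)/(2μB K^θ) + nA₂/(2μB K) + n‖x̄[0] − x*‖²/(2μB K^{1−θ})`. -/
theorem stmt_10
    {n d : ℕ} (hn : 1 ≤ n) (hd : 1 ≤ d)
    {μ M : ℝ} (hμ : 0 < μ) (hμM : μ ≤ M)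
    (f : Fin n → EuclideanSpace ℝ (Fin d) → ℝ)
    (hdiff : ∀ i, Differentiable ℝ (f i))
    (hsc : ∀ i, ConvexOn ℝ Set.univ (fun x => f i x - μ / 2 * ‖x‖ ^ 2))
    (hlip : ∀ i x y, ‖gradient (f i) x - gradient (f i) y‖ ≤ M * ‖x - y‖)
    (xstar : EuclideanSpace ℝ (Fin d))
    (hxstar : ∀ y, ∑ i, f i xstar ≤ ∑ i, f i y)
    (L : ℝ) (hL : 0 < L)
    (C q : ℝ) (hC : 0 < C) (hq : q ∈ Set.Ioo (0:ℝ) 1)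
    (a : Fin n → ℝ) (ha : ∀ i, 0 ≤ a i)
    {θ B : ℝ} (hθ : θ ∈ Set.Ioo (0:ℝ) 1) (hB : 0 < B) :
    ∃ A₁ A₂ A₃ : ℝ, 0 < A₁ ∧ 0 < A₂ ∧ 0 < A₃ ∧
      ∀ K : ℕ, 1 ≤ K →
      ∀ δ : Fin n → ℕ → ℕ, (∀ i k, δ i k = 1) →
      ∀ α : Fin n → ℕ → ℝ, (∀ i k, α i k = B / (K : ℝ) ^ θ) →
      ∀ z : Fin n → ℕ → EuclideanSpace ℝ (Fin d),
      ∀ xbar : ℕ → EuclideanSpace ℝ (Fin d),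
      (∀ k, xbar (k + 1) =
        xbar k - ((n : ℝ))⁻¹ • ∑ i, (α i k * (δ i k : ℝ)) • gradient (f i) (z i k)) →
      (∀ i k, ‖gradient (f i) (z i k)‖ ≤ L) →
      (∀ i k, ‖gradient (f i) (xbar k)‖ ≤ L) →
      (∀ i k, ‖z i k - xbar k‖ ≤
        C * q ^ k * a i +
          C * L * ∑ s ∈ Finset.range (k + 1), q ^ (k - s) * (α i s * (δ i s : ℝ))) →
      (∀ i, 0 < ∑ k ∈ Finset.range K, α i k * (δ i k : ℝ)) →
      ∀ xK : EuclideanSpace ℝ (Fin d),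
      (∀ y, ∑ i, ((∑ k ∈ Finset.range K, α i k * (δ i k : ℝ)) /
              (∑ j, ∑ k ∈ Finset.range K, α j k * (δ j k : ℝ))) * f i xK ≤
            ∑ i, ((∑ k ∈ Finset.range K, α i k * (δ i k : ℝ)) /
              (∑ j, ∑ k ∈ Finset.range K, α j k * (δ j k : ℝ))) * f i y) →
      (∀ i, (∑ k ∈ Finset.range K, α i k * (δ i k : ℝ)) /
          (∑ j, ∑ k ∈ Finset.range K, α j k * (δ j k : ℝ)) = 1 / (n : ℝ)) ∧
      xK = xstar ∧
      (1 / (K : ℝ)) * ∑ k ∈ Finset.range K, ‖xbar k - xstar‖ ^ 2 ≤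
        (n : ℝ) * (A₁ + A₃) / (2 * μ * B * (K : ℝ) ^ θ)
          + (n : ℝ) * A₂ / (2 * μ * B * (K : ℝ))
          + (n : ℝ) * ‖xbar 0 - xstar‖ ^ 2 / (2 * μ * B * (K : ℝ) ^ (1 - θ)) :=
  stmt_10_general hn hμ hμM f hdiff hsc hlip xstar hxstar L hL C q hC hq a ha hB
end

section
/- Fix an integer K ≥ 1, θ ∈ (1/2, 1) and B > 0. Define c_i[k] := ∑_{ℓ=0}^k δ_i[ℓ] and suppose δ_i[0] = 1 for every i. Suppose each agent uses the step-size α_i[k] = w_i B / (c_i[k])^θ with the scaling factor w_i := ( ∑_{k=0}^{K−1} (k+1)^{−θ} ) / ( ∑_{k=0}^{c_i[K−1]−1} (k+1)^{−θ} ) (note w_i ≥ 1 since c_i[K−1] ≤ K). Then p_i^{(K)} = B ∑_{k=0}^{K−1} (k+1)^{−θ} for every i ∈ {1,…,n}; consequently p̄_i^{(K)} = 1/n for every i, and the minimizer x*_K of the reweighted objective F_K := ∑_{i=1}^n p̄_i^{(K)} f_i equals the minimizer x* of F := ∑_{i=1}^n f_i. -/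
/-!
Each agent's total step `p_i = ∑_k α_i[k] δ_i[k]` only sees the step-sizes at the activation
times; at the `m`-th activation the counter `c_i` equals `m`, so `p_i = w_i B ∑_{m < c_i[K-1]} (m+1)^{-θ}`,
and the scaling factor `w_i` is chosen exactly to turn this partial sum into the one over all `K`
rounds. All `p_i` being equal, the reweighted objective is `F / n`, and `F` is strongly convex,
so both objectives have the same unique minimizer.
-/

open Finset

theorem sum_range_nsmul_comp_partialSum {M : Type*} [AddCommMonoid M] {δ : ℕ → ℕ}
    (hδ : ∀ k, δ k = 0 ∨ δ k = 1) (g : ℕ → M) (K : ℕ) :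
    ∑ k ∈ range K, δ k • g (∑ ℓ ∈ range (k + 1), δ ℓ) =
      ∑ m ∈ range (∑ ℓ ∈ range K, δ ℓ), g (m + 1) := by
  induction K with
  | zero => simp
  | succ K ih =>
    rw [sum_range_succ, ih, sum_range_succ δ]
    rcases hδ K with h | h
    · simp [h]
    · simp [h, sum_range_succ]

theorem sum_range_rpow_neg_pos (θ : ℝ) {N : ℕ} (hN : 0 < N) :
    0 < ∑ k ∈ range N, ((k : ℝ) + 1) ^ (-θ) :=
  sum_pos (fun _ _ => by positivity) (nonempty_range_iff.mpr hN.ne')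

theorem sum_stepSize_mul_activation {δ : ℕ → ℕ} (hδ : ∀ k, δ k = 0 ∨ δ k = 1)
    (hδ0 : δ 0 = 1) {K : ℕ} (hK : 1 ≤ K) {θ B w : ℝ}
    (hw : w = (∑ k ∈ range K, ((k : ℝ) + 1) ^ (-θ)) /
      ∑ k ∈ range (∑ ℓ ∈ range K, δ ℓ), ((k : ℝ) + 1) ^ (-θ))
    {α : ℕ → ℝ} (hα : ∀ k, α k = w * B / ((∑ ℓ ∈ range (k + 1), δ ℓ : ℕ) : ℝ) ^ θ) :
    ∑ k ∈ range K, α k * (δ k : ℝ) = B * ∑ k ∈ range K, ((k : ℝ) + 1) ^ (-θ) := by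
  have hcount : 1 ≤ ∑ ℓ ∈ range K, δ ℓ :=
    hδ0 ▸ single_le_sum (fun _ _ => Nat.zero_le _) (mem_range.mpr hK)
  have hT := sum_range_rpow_neg_pos θ hcount
  calc ∑ k ∈ range K, α k * (δ k : ℝ)
      = ∑ k ∈ range K, δ k • (w * B / ((∑ ℓ ∈ range (k + 1), δ ℓ : ℕ) : ℝ) ^ θ) := by
        simp only [hα, nsmul_eq_mul, mul_comm]
    _ = ∑ m ∈ range (∑ ℓ ∈ range K, δ ℓ), w * B / ((m + 1 : ℕ) : ℝ) ^ θ :=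
        sum_range_nsmul_comp_partialSum hδ (fun m => w * B / (m : ℝ) ^ θ) K
    _ = w * B * ∑ m ∈ range (∑ ℓ ∈ range K, δ ℓ), ((m : ℝ) + 1) ^ (-θ) := by
        rw [mul_sum]
        refine sum_congr rfl fun m _ => ?_
        rw [Real.rpow_neg (by positivity)]
        push_cast
        ring
    _ = B * ∑ k ∈ range K, ((k : ℝ) + 1) ^ (-θ) := by
        rw [hw]
        field_simp

theorem div_sum_eq_one_div_card {ι : Type*} [Fintype ι] {p : ι → ℝ} {c : ℝ} (hc : c ≠ 0)
    (hp : ∀ i, p i = c) (i : ι) : p i / ∑ j, p j = 1 / Fintype.card ι := by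
  have : Nonempty ι := ⟨i⟩
  have : (Fintype.card ι : ℝ) ≠ 0 := Nat.cast_ne_zero.mpr Fintype.card_ne_zero
  simp only [hp, sum_const, card_univ, nsmul_eq_mul]
  field_simp

theorem StrongConvexOn.sum {ι E : Type*} [NormedAddCommGroup E] [NormedSpace ℝ E]
    {s : Set E} (hs : Convex ℝ s) {m : ℝ} (t : Finset ι) {f : ι → E → ℝ}
    (hf : ∀ i ∈ t, StrongConvexOn s m (f i)) :
    StrongConvexOn s (#t * m) (∑ i ∈ t, f i) := by
  induction t using Finset.cons_induction with
  | empty =>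
    simp only [card_empty, Nat.cast_zero, zero_mul, sum_empty]
    exact strongConvexOn_zero.mpr (convexOn_const 0 hs)
  | cons a t ha ih =>
    rw [sum_cons]
    refine ((hf a (mem_cons_self a t)).add (ih fun i hi => hf i (mem_cons_of_mem hi))).mono
      fun r => le_of_eq ?_
    simp only [card_cons, Nat.cast_add, Nat.cast_one, Pi.add_apply]
    ring

theorem eq_of_forall_sum_le_of_strongConvexOn {ι E : Type*} [Fintype ι] [Nonempty ι]
    [NormedAddCommGroup E] [InnerProductSpace ℝ E] {μ : ℝ} (hμ : 0 < μ) {f : ι → E → ℝ}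
    (hf : ∀ i, ConvexOn ℝ Set.univ (fun x => f i x - μ / 2 * ‖x‖ ^ 2)) {x y : E}
    (hx : ∀ z, ∑ i, f i x ≤ ∑ i, f i z) (hy : ∀ z, ∑ i, f i y ≤ ∑ i, f i z) : x = y := by
  have hF : StrongConvexOn Set.univ (Fintype.card ι * μ) (∑ i, f i) :=
    StrongConvexOn.sum convex_univ univ fun i _ => strongConvexOn_iff_convex.mpr (hf i)
  refine (hF.strictConvexOn (by positivity)).eq_of_isMinOn
    (isMinOn_univ_iff.mpr fun z => ?_) (isMinOn_univ_iff.mpr fun z => ?_)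
    (Set.mem_univ _) (Set.mem_univ _)
  · simpa only [Finset.sum_apply] using hx z
  · simpa only [Finset.sum_apply] using hy z

theorem stmt_14_general
    {n d : ℕ} (hn : 1 ≤ n)
    {μ : ℝ} (hμ : 0 < μ)
    (f : Fin n → EuclideanSpace ℝ (Fin d) → ℝ)
    (hsc : ∀ i, ConvexOn ℝ Set.univ (fun x => f i x - μ / 2 * ‖x‖ ^ 2))
    (xstar : EuclideanSpace ℝ (Fin d))
    (hxstar : ∀ y, ∑ i, f i xstar ≤ ∑ i, f i y)
    (K : ℕ) (hK : 1 ≤ K)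
    {θ B : ℝ} (hB : 0 < B)
    (δ : Fin n → ℕ → ℕ) (hδ : ∀ i k, δ i k = 0 ∨ δ i k = 1) (hδ0 : ∀ i, δ i 0 = 1)
    (w : Fin n → ℝ)
    (hwdef : ∀ i, w i =
      (∑ k ∈ Finset.range K, ((k : ℝ) + 1) ^ (-θ)) /
        (∑ k ∈ Finset.range (∑ ℓ ∈ Finset.range ((K - 1) + 1), δ i ℓ),
          ((k : ℝ) + 1) ^ (-θ)))
    (α : Fin n → ℕ → ℝ)
    (hα : ∀ i k, α i k =
      w i * B / ((∑ ℓ ∈ Finset.range (k + 1), δ i ℓ : ℕ) : ℝ) ^ θ)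
    (xK : EuclideanSpace ℝ (Fin d))
    (hxK : ∀ y, ∑ i, ((∑ k ∈ Finset.range K, α i k * (δ i k : ℝ)) /
            (∑ j, ∑ k ∈ Finset.range K, α j k * (δ j k : ℝ))) * f i xK ≤
          ∑ i, ((∑ k ∈ Finset.range K, α i k * (δ i k : ℝ)) /
            (∑ j, ∑ k ∈ Finset.range K, α j k * (δ j k : ℝ))) * f i y) :
    (∀ i, ∑ k ∈ Finset.range K, α i k * (δ i k : ℝ) =
      B * ∑ k ∈ Finset.range K, ((k : ℝ) + 1) ^ (-θ)) ∧
    (∀ i, (∑ k ∈ Finset.range K, α i k * (δ i k : ℝ)) /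
        (∑ j, ∑ k ∈ Finset.range K, α j k * (δ j k : ℝ)) = 1 / (n : ℝ)) ∧
    xK = xstar := by
  have hp : ∀ i, ∑ k ∈ range K, α i k * (δ i k : ℝ) =
      B * ∑ k ∈ range K, ((k : ℝ) + 1) ^ (-θ) := fun i =>
    sum_stepSize_mul_activation (hδ i) (hδ0 i) hK (by rw [hwdef i, Nat.sub_add_cancel hK])
      (hα i)
  have hpbar : ∀ i, (∑ k ∈ range K, α i k * (δ i k : ℝ)) /
      (∑ j, ∑ k ∈ range K, α j k * (δ j k : ℝ)) = 1 / (n : ℝ) := fun i => by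
    simpa using div_sum_eq_one_div_card
      (mul_pos hB (sum_range_rpow_neg_pos θ hK)).ne' hp i
  refine ⟨hp, hpbar, ?_⟩
  have hne : Nonempty (Fin n) := ⟨⟨0, hn⟩⟩
  refine eq_of_forall_sum_le_of_strongConvexOn hμ hsc (fun y => ?_) hxstar
  have hy := hxK y
  simp only [hpbar, ← mul_sum] at hy
  exact le_of_mul_le_mul_left hy (by positivity)

/-- Corollary (diminishing step-size with known update rates): if each agent uses
`α_i[k] = w_i B / (c_i[k])^θ` with
`w_i = (∑_{k<K} (k+1)^{−θ}) / (∑_{k<c_i[K−1]} (k+1)^{−θ})`, then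
`p_i^{(K)} = B ∑_{k<K} (k+1)^{−θ}` for every `i`, hence `p̄_i^{(K)} = 1/n`, and the
minimizer of the reweighted objective equals the global minimizer `x*`. -/
theorem stmt_14
    {n d : ℕ} (hn : 1 ≤ n) (hd : 1 ≤ d)
    {μ M : ℝ} (hμ : 0 < μ) (hμM : μ ≤ M)
    (f : Fin n → EuclideanSpace ℝ (Fin d) → ℝ)
    (hdiff : ∀ i, Differentiable ℝ (f i))
    (hsc : ∀ i, ConvexOn ℝ Set.univ (fun x => f i x - μ / 2 * ‖x‖ ^ 2))
    (hlip : ∀ i x y, ‖gradient (f i) x - gradient (f i) y‖ ≤ M * ‖x - y‖)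
    (xstar : EuclideanSpace ℝ (Fin d))
    (hxstar : ∀ y, ∑ i, f i xstar ≤ ∑ i, f i y)
    (K : ℕ) (hK : 1 ≤ K)
    {θ B : ℝ} (hθ : θ ∈ Set.Ioo (1/2 : ℝ) 1) (hB : 0 < B)
    (δ : Fin n → ℕ → ℕ) (hδ : ∀ i k, δ i k = 0 ∨ δ i k = 1) (hδ0 : ∀ i, δ i 0 = 1)
    (w : Fin n → ℝ)
    (hwdef : ∀ i, w i =
      (∑ k ∈ Finset.range K, ((k : ℝ) + 1) ^ (-θ)) /
        (∑ k ∈ Finset.range (∑ ℓ ∈ Finset.range ((K - 1) + 1), δ i ℓ),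
          ((k : ℝ) + 1) ^ (-θ)))
    (α : Fin n → ℕ → ℝ)
    (hα : ∀ i k, α i k =
      w i * B / ((∑ ℓ ∈ Finset.range (k + 1), δ i ℓ : ℕ) : ℝ) ^ θ)
    (xK : EuclideanSpace ℝ (Fin d))
    (hxK : ∀ y, ∑ i, ((∑ k ∈ Finset.range K, α i k * (δ i k : ℝ)) /
            (∑ j, ∑ k ∈ Finset.range K, α j k * (δ j k : ℝ))) * f i xK ≤
          ∑ i, ((∑ k ∈ Finset.range K, α i k * (δ i k : ℝ)) /
            (∑ j, ∑ k ∈ Finset.range K, α j k * (δ j k : ℝ))) * f i y) :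
    (∀ i, ∑ k ∈ Finset.range K, α i k * (δ i k : ℝ) =
      B * ∑ k ∈ Finset.range K, ((k : ℝ) + 1) ^ (-θ)) ∧
    (∀ i, (∑ k ∈ Finset.range K, α i k * (δ i k : ℝ)) /
        (∑ j, ∑ k ∈ Finset.range K, α j k * (δ j k : ℝ)) = 1 / (n : ℝ)) ∧
    xK = xstar :=
  stmt_14_general hn hμ f hsc xstar hxstar K hK hB δ hδ hδ0 w hwdef α hα xK hxK
end
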